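/- arXiv:1601.07194 — 4 statements merged into one kernel-verified Lean document; each statement's English description precedes it below -/
import Mathlib

section
/- Let u be a quasi-definite moment functional on Π^d and let v be its Uvarov modification at N distinct points ξ_1,…,ξ_N with nonzero masses λ_1,…,λ_N. If v is quasi-definite, then: (i) for every n ≥ 1 the N×N matrix I_N + Λ𝒦_{n−1} is invertible; (ii) for every OPS {ℚ_n} with respect to v there exists an OPS {ℙ_n} with respect to u (namely the one in which ℙ_n has the same leading coefficient as ℚ_n) such that ℚ_0 = ℙ_0 and, for every n ≥ 1, ℚ_n(x) = ℙ_n(x) − 𝖯_n(ξ)(I_N + Λ𝒦_{n−1})^{−1} Λ 𝖪_{n−1}(ξ,x); and (iii) the nonsingular matrices Ĥ_n = ⟨v, ℚ_n ℚ_n^t⟩ satisfy Ĥ_n = H_n + 𝖯_n(ξ)(I_N + Λ𝒦_{n−1})^{−1} Λ 𝖯_n(ξ)^t for all n ≥ 0. -/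
open MvPolynomial Matrix

/-- The index set for monomials of total degree `n` in `d` variables:
multi-indices (exponent tuples) summing to `n`. Its cardinality is `r_n^d = C(n+d-1,n)`. -/
abbrev Idx (d n : ℕ) : Type := {ν : Fin d → ℕ // ν ∈ Finset.Nat.antidiagonalTuple d n}

/-- The monomial `x^ν` associated with a multi-index `ν` of total degree `n`;
the family `fun α : Idx d n => monIdx α` is the canonical vector `𝕏_n`. -/
noncomputable def monIdx {d n : ℕ} (α : Idx d n) : MvPolynomial (Fin d) ℝ :=
  MvPolynomial.monomial (Finsupp.equivFunOnFinite.symm α.1) 1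

/-- A polynomial system (PS): a sequence of vectors `ℙ_n` of size `r_n^d` whose
entries are polynomials of total degree `n`, the entries of `ℙ_0,…,ℙ_n` forming a
basis of the polynomials of total degree at most `n`. -/
structure PolySystem (d : ℕ) where
  vec : (n : ℕ) → Idx d n → MvPolynomial (Fin d) ℝ
  degree_eq : ∀ n α, (vec n α).totalDegree = n
  indep : LinearIndependent ℝ (fun p : (Σ n : ℕ, Idx d n) => vec p.1 p.2)
  spans : ∀ (n : ℕ) (p : MvPolynomial (Fin d) ℝ), p.totalDegree ≤ n →
    p ∈ Submodule.span ℝ {q | ∃ m ≤ n, ∃ α : Idx d m, q = vec m α}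

/-- `{ℙ_n}` is an orthogonal polynomial system (OPS) with respect to the moment
functional `u` : `⟨u, 𝕏_m ℙ_n^t⟩ = 0` for `m < n` and `⟨u, 𝕏_n ℙ_n^t⟩` nonsingular. -/
def IsOPS {d : ℕ} (u : MvPolynomial (Fin d) ℝ →ₗ[ℝ] ℝ) (P : PolySystem d) : Prop :=
  (∀ m n : ℕ, m < n → ∀ (α : Idx d m) (β : Idx d n), u (monIdx α * P.vec n β) = 0) ∧
  (∀ n : ℕ, IsUnit (Matrix.of fun α β : Idx d n => u (monIdx α * P.vec n β)).det)

/-- `u` is quasi-definite iff it admits an OPS. -/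
def QuasiDefinite {d : ℕ} (u : MvPolynomial (Fin d) ℝ →ₗ[ℝ] ℝ) : Prop :=
  ∃ P : PolySystem d, IsOPS u P

/-- `H_n = ⟨u, ℙ_n ℙ_n^t⟩`. -/
noncomputable def Hmat {d : ℕ} (u : MvPolynomial (Fin d) ℝ →ₗ[ℝ] ℝ) (P : PolySystem d)
    (n : ℕ) : Matrix (Idx d n) (Idx d n) ℝ :=
  Matrix.of fun α β => u (P.vec n α * P.vec n β)

/-- `P_m(u;x,y) = ℙ_m(x)^t H_m⁻¹ ℙ_m(y)`. -/
noncomputable def kerP {d : ℕ} (u : MvPolynomial (Fin d) ℝ →ₗ[ℝ] ℝ) (P : PolySystem d)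
    (m : ℕ) (x y : Fin d → ℝ) : ℝ :=
  ∑ α, ∑ β, eval x (P.vec m α) * (Hmat u P m)⁻¹ α β * eval y (P.vec m β)

/-- `kerLT u P n = K_{n-1}(u;·,·) = Σ_{m<n} P_m(u;·,·)`, so that `kerLT u P 0 = K_{-1} = 0`. -/
noncomputable def kerLT {d : ℕ} (u : MvPolynomial (Fin d) ℝ →ₗ[ℝ] ℝ) (P : PolySystem d)
    (n : ℕ) (x y : Fin d → ℝ) : ℝ :=
  ∑ m ∈ Finset.range n, kerP u P m x y

/-- `𝖯_n(ξ) = (ℙ_n(ξ_1)|⋯|ℙ_n(ξ_N))`. -/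
noncomputable def Pmat {d N : ℕ} (P : PolySystem d) (ξ : Fin N → (Fin d → ℝ)) (n : ℕ) :
    Matrix (Idx d n) (Fin N) ℝ :=
  Matrix.of fun α i => eval (ξ i) (P.vec n α)

/-- `Kmat u P ξ n = 𝒦_{n-1} = (K_{n-1}(u;ξ_i,ξ_j))_{i,j}`, with `𝒦_{-1} = 0`. -/
noncomputable def Kmat {d N : ℕ} (u : MvPolynomial (Fin d) ℝ →ₗ[ℝ] ℝ) (P : PolySystem d)
    (ξ : Fin N → (Fin d → ℝ)) (n : ℕ) : Matrix (Fin N) (Fin N) ℝ :=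
  Matrix.of fun i j => kerLT u P n (ξ i) (ξ j)

/-- `Kvec u P ξ n x = 𝖪_{n-1}(ξ,x) = (K_{n-1}(u;ξ_1,x),…,K_{n-1}(u;ξ_N,x))^t`, with `𝖪_{-1}=0`. -/
noncomputable def Kvec {d N : ℕ} (u : MvPolynomial (Fin d) ℝ →ₗ[ℝ] ℝ) (P : PolySystem d)
    (ξ : Fin N → (Fin d → ℝ)) (n : ℕ) (x : Fin d → ℝ) : Fin N → ℝ :=
  fun i => kerLT u P n (ξ i) x

/-- A PS is monic if the degree-`n` homogeneous part of the entry of `ℙ_n` indexed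
by `α` is exactly the monomial `x^α`. -/
def PolySystem.IsMonic {d : ℕ} (P : PolySystem d) : Prop :=
  ∀ (n : ℕ) (α : Idx d n) (ν : Fin d →₀ ℕ), (ν.sum fun _ e => e) = n →
    MvPolynomial.coeff ν (P.vec n α) = if ν = Finsupp.equivFunOnFinite.symm α.1 then 1 else 0

/-- Multiplication of a real matrix times a vector of polynomials. -/
noncomputable def matVec {d : ℕ} {a b : Type} [Fintype b] (M : Matrix a b ℝ)
    (w : b → MvPolynomial (Fin d) ℝ) (i : a) : MvPolynomial (Fin d) ℝ :=
  ∑ j, M i j • w j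

/-- The matrix `L_{n,i}` determined by `x_i 𝕏_n = L_{n,i} 𝕏_{n+1}`. -/
noncomputable def Lmat (d n : ℕ) (i : Fin d) : Matrix (Idx d n) (Idx d (n + 1)) ℝ :=
  Matrix.of fun α β => if β.1 = (fun j => α.1 j + if j = i then 1 else 0) then 1 else 0

/-- The unique multi-index of degree 0. -/
def zeroIdx {d : ℕ} : Idx d 0 :=
  ⟨fun _ => 0, by simp [Finset.Nat.mem_antidiagonalTuple]⟩

/-- The degree-2 multi-index `e_i + e_j`. -/
def e2 {d : ℕ} (i j : Fin d) : Idx d 2 :=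
  ⟨fun k => (if k = i then 1 else 0) + (if k = j then 1 else 0), by
    simp [Finset.Nat.mem_antidiagonalTuple, Finset.sum_add_distrib]⟩

/-- `A_{h,2} = Σ_{1≤i≤j≤d} a^{(2)}_{ij} L_{h,j} L_{h+1,i}`. -/
noncomputable def Amat2 {d : ℕ} (a2 : Idx d 2 → ℝ) (h : ℕ) :
    Matrix (Idx d h) (Idx d (h + 2)) ℝ :=
  ∑ i : Fin d, ∑ j : Fin d,
    if i ≤ j then a2 (e2 i j) • (Lmat d h j * Lmat d (h + 1) i) else 0

/-- The polynomial `λ(x) = a_2·𝕏_2 + a_1·𝕏_1 + a_0`. -/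
noncomputable def lamPoly {d : ℕ} (a2 : Idx d 2 → ℝ) (a1 : Idx d 1 → ℝ) (a0 : ℝ) :
    MvPolynomial (Fin d) ℝ :=
  (∑ α : Idx d 2, a2 α • monIdx α) + (∑ α : Idx d 1, a1 α • monIdx α) + MvPolynomial.C a0

namespace Uvarov
open Finset

variable {d : ℕ}

abbrev MvP (d : ℕ) := MvPolynomial (Fin d) ℝ

/-- The finsupp associated to an index. -/
noncomputable def toF {d n : ℕ} (α : Idx d n) : Fin d →₀ ℕ := Finsupp.equivFunOnFinite.symm α.1

lemma toF_inj {n : ℕ} : Function.Injective (toF (d := d) (n := n)) :=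
  fun _ _ h => Subtype.ext (Finsupp.equivFunOnFinite.symm.injective h)

lemma fsum_eq (ν : Fin d →₀ ℕ) : (ν.sum fun _ e => e) = ∑ i, ν i :=
  Finsupp.sum_fintype _ _ fun _ => rfl

lemma sum_toF {n : ℕ} (α : Idx d n) : ∑ i, toF α i = n := by
  have h := α.2
  rw [Finset.Nat.mem_antidiagonalTuple] at h
  simpa [toF] using h

lemma monIdx_eq {n : ℕ} (α : Idx d n) : monIdx α = monomial (toF α) 1 := rfl

/-- The index of a finsupp of total degree `∑ i, ν i`. -/
noncomputable def ofF (ν : Fin d →₀ ℕ) : Idx d (∑ i, ν i) :=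
  ⟨⇑ν, by rw [Finset.Nat.mem_antidiagonalTuple]⟩

lemma toF_ofF (ν : Fin d →₀ ℕ) : toF (ofF ν) = ν := by
  simp [toF, ofF, Finsupp.equivFunOnFinite_symm_coe]

lemma support_sum_le (P : PolySystem d) (n : ℕ) (α : Idx d n) {ν : Fin d →₀ ℕ}
    (hν : ν ∈ (P.vec n α).support) : ∑ i, ν i ≤ n := by
  have h := MvPolynomial.le_totalDegree hν
  rwa [fsum_eq, P.degree_eq] at h

lemma coeff_vec_zero (P : PolySystem d) (n : ℕ) (α : Idx d n) {ν : Fin d →₀ ℕ}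
    (h : n < ∑ i, ν i) : MvPolynomial.coeff ν (P.vec n α) = 0 := by
  by_contra hc
  exact absurd (support_sum_le P n α (MvPolynomial.mem_support_iff.mpr hc)) (by omega)

/-- Low-degree polynomials annihilate against anything orthogonal to low monomials. -/
lemma low_mul_apply (w : MvP d →ₗ[ℝ] ℝ) {n : ℕ} {q p : MvP d}
    (horth : ∀ m, m < n → ∀ α : Idx d m, w (monIdx α * q) = 0)
    (hp : ∀ ν ∈ p.support, ∑ i, ν i < n) : w (p * q) = 0 := by
  conv_lhs => rw [p.as_sum]
  rw [Finset.sum_mul, map_sum]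
  refine Finset.sum_eq_zero fun ν hν => ?_
  have hm := hp ν hν
  have hmono : (monomial ν) (MvPolynomial.coeff ν p) * q
      = MvPolynomial.coeff ν p • (monIdx (ofF ν) * q) := by
    rw [monIdx_eq, toF_ofF, ← smul_mul_assoc, MvPolynomial.smul_monomial, smul_eq_mul, mul_one]
  rw [hmono, _root_.map_smul, smul_eq_mul, horth _ hm, mul_zero]

lemma vec_low_mul {w : MvP d →ₗ[ℝ] ℝ} {R : PolySystem d} (hR : IsOPS w R) {n : ℕ}
    (β : Idx d n) {p : MvP d} (hp : ∀ ν ∈ p.support, ∑ i, ν i < n) :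
    w (p * R.vec n β) = 0 :=
  low_mul_apply w (fun m hm α => hR.1 m n hm α β) hp

lemma vec_mul_vec {w : MvP d →ₗ[ℝ] ℝ} {R : PolySystem d} (hR : IsOPS w R) {m k : ℕ}
    (hmk : m ≠ k) (α : Idx d m) (β : Idx d k) : w (R.vec m α * R.vec k β) = 0 := by
  rcases hmk.lt_or_gt with h | h
  · exact vec_low_mul hR β fun ν hν => lt_of_le_of_lt (support_sum_le R m α hν) h
  · rw [mul_comm]
    exact vec_low_mul hR α fun ν hν => lt_of_le_of_lt (support_sum_le R k β hν) h

end Uvarov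
namespace Uvarov
open Finset

variable {d : ℕ}

/-- Leading coefficient matrix. -/
noncomputable def Smat (vec : (n : ℕ) → Idx d n → MvP d) (n : ℕ) :
    Matrix (Idx d n) (Idx d n) ℝ :=
  Matrix.of fun α γ => MvPolynomial.coeff (toF γ) (vec n α)

lemma sum_coeff_monIdx {n : ℕ} (c : Idx d n → ℝ) (δ : Idx d n) :
    ∑ γ, c γ * MvPolynomial.coeff (toF δ) (monIdx γ) = c δ := by
  rw [Finset.sum_eq_single δ]
  · rw [monIdx_eq, MvPolynomial.coeff_monomial, if_pos rfl, mul_one]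
  · intro γ _ hγ
    rw [monIdx_eq, MvPolynomial.coeff_monomial, if_neg (fun h => hγ (toF_inj h)), mul_zero]
  · simp

lemma coeff_sum_smul_vec {n : ℕ} (vec : Idx d n → MvP d) (c : Idx d n → ℝ)
    (ν : Fin d →₀ ℕ) :
    MvPolynomial.coeff ν (∑ α, c α • vec α) = ∑ α, c α * MvPolynomial.coeff ν (vec α) := by
  rw [MvPolynomial.coeff_sum]
  exact Finset.sum_congr rfl fun α _ => by rw [MvPolynomial.coeff_smul, smul_eq_mul]

lemma smat_isUnit (P : PolySystem d) (n : ℕ) : IsUnit (Smat P.vec n).det := by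
  rw [← Matrix.isUnit_iff_isUnit_det, ← Matrix.vecMul_surjective_iff_isUnit]
  have key : ∀ γ : Idx d n, ∃ c : Idx d n → ℝ, c ᵥ* Smat P.vec n = Pi.single γ 1 := by
    intro γ
    have hmem : monIdx γ ∈ Submodule.span ℝ {q | ∃ m ≤ n, ∃ α : Idx d m, q = P.vec m α} := by
      apply P.spans
      rw [monIdx_eq, MvPolynomial.totalDegree_monomial _ one_ne_zero, fsum_eq, sum_toF]
    have hset : {q : MvP d | ∃ m ≤ n, ∃ α : Idx d m, q = P.vec m α} =
        {q | ∃ m, m < n ∧ ∃ α : Idx d m, q = P.vec m α}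
          ∪ Set.range (fun α : Idx d n => P.vec n α) := by
      ext q
      constructor
      · rintro ⟨m, hm, α, rfl⟩
        rcases lt_or_eq_of_le hm with h | h
        · exact Or.inl ⟨m, h, α, rfl⟩
        · subst h; exact Or.inr ⟨α, rfl⟩
      · rintro (⟨m, hm, α, rfl⟩ | ⟨α, rfl⟩)
        exacts [⟨m, hm.le, α, rfl⟩, ⟨n, le_rfl, α, rfl⟩]
    rw [hset, Submodule.span_union, Submodule.mem_sup] at hmem
    obtain ⟨w, hw, t, ht, hwt⟩ := hmem
    rw [Submodule.mem_span_range_iff_exists_fun] at ht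
    obtain ⟨c, rfl⟩ := ht
    refine ⟨c, funext fun δ => ?_⟩
    have hw0 : MvPolynomial.coeff (toF δ) w = 0 := by
      have hle : Submodule.span ℝ {q : MvP d | ∃ m, m < n ∧ ∃ α : Idx d m, q = P.vec m α} ≤
          LinearMap.ker (MvPolynomial.lcoeff ℝ (toF δ)) := by
        rw [Submodule.span_le]
        rintro q ⟨m, hm, α, rfl⟩
        simp only [SetLike.mem_coe, LinearMap.mem_ker, MvPolynomial.lcoeff_apply]
        exact coeff_vec_zero P m α (by rw [sum_toF]; exact hm)
      simpa using hle hw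
    have h2 := congrArg (MvPolynomial.coeff (toF δ)) hwt
    rw [MvPolynomial.coeff_add, hw0, zero_add, coeff_sum_smul_vec] at h2
    have hlhs : (c ᵥ* Smat P.vec n) δ = ∑ α, c α * MvPolynomial.coeff (toF δ) (P.vec n α) := rfl
    rw [hlhs, h2, monIdx_eq, MvPolynomial.coeff_monomial, Pi.single_apply]
    by_cases h : δ = γ
    · rw [if_pos h, if_pos (by rw [h])]
    · rw [if_neg h, if_neg (fun hh => h (toF_inj hh).symm)]
  intro t
  choose cs hcs using key
  have hcs' : ∀ γ δ, ∑ α, cs γ α * Smat P.vec n α δ = if δ = γ then (1:ℝ) else 0 := by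
    intro γ δ
    have h := congrFun (hcs γ) δ
    simpa [Matrix.vecMul, dotProduct, Pi.single_apply] using h
  refine ⟨fun α => ∑ γ, t γ * cs γ α, ?_⟩
  funext δ
  show ((fun α => ∑ γ, t γ * cs γ α) ᵥ* Smat P.vec n) δ = t δ
  have hlhs : ((fun α => ∑ γ, t γ * cs γ α) ᵥ* Smat P.vec n) δ
      = ∑ α, (∑ γ, t γ * cs γ α) * Smat P.vec n α δ := rfl
  rw [hlhs]
  calc ∑ α, (∑ γ, t γ * cs γ α) * Smat P.vec n α δ
      = ∑ γ, t γ * ∑ α, cs γ α * Smat P.vec n α δ := by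
        simp only [Finset.sum_mul]
        rw [Finset.sum_comm]
        exact Finset.sum_congr rfl fun γ _ => by rw [Finset.mul_sum]; exact Finset.sum_congr rfl fun α _ => by ring
    _ = ∑ γ, t γ * if δ = γ then (1:ℝ) else 0 := Finset.sum_congr rfl fun γ _ => by rw [hcs']
    _ = t δ := by simp

end Uvarov
namespace Uvarov
open Finset

variable {d : ℕ}

lemma coeff_range_sum (b : ℕ) (f : (m : ℕ) → MvP d) (ν : Fin d →₀ ℕ) :
    MvPolynomial.coeff ν (∑ m ∈ Finset.range b, f m)
      = ∑ m ∈ Finset.range b, MvPolynomial.coeff ν (f m) :=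
  MvPolynomial.coeff_sum _ _ _

lemma coeff_high_vec (vec : (n : ℕ) → Idx d n → MvP d)
    (h1 : ∀ n α, ∀ ν ∈ (vec n α).support, ∑ i, ν i ≤ n) {m n : ℕ} (hmn : m < n)
    (α : Idx d m) (γ : Idx d n) : MvPolynomial.coeff (toF γ) (vec m α) = 0 := by
  by_contra hc
  have := h1 m α (toF γ) (MvPolynomial.mem_support_iff.mpr hc)
  rw [sum_toF] at this
  omega

lemma indep_aux (vec : (n : ℕ) → Idx d n → MvP d)
    (h1 : ∀ n α, ∀ ν ∈ (vec n α).support, ∑ i, ν i ≤ n)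
    (hS : ∀ n, IsUnit (Smat vec n).det) :
    ∀ (b : ℕ) (c : (m : ℕ) → Idx d m → ℝ),
      (∑ m ∈ Finset.range b, ∑ α, c m α • vec m α = 0) →
      ∀ m, m < b → ∀ α, c m α = 0 := by
  intro b
  induction b with
  | zero => intro c _ m hm; omega
  | succ b ih =>
    intro c hsum m hm
    have htopv : (fun α => c b α) ᵥ* Smat vec b = 0 := by
      funext γ
      have hco := congrArg (MvPolynomial.coeff (toF γ)) hsum
      rw [MvPolynomial.coeff_zero, coeff_range_sum, Finset.sum_range_succ] at hco
      rw [Finset.sum_eq_zero (fun m' hm' => ?lowzero), zero_add, coeff_sum_smul_vec] at hco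
      case lowzero =>
        rw [coeff_sum_smul_vec]
        exact Finset.sum_eq_zero fun α _ => by
          rw [coeff_high_vec vec h1 (Finset.mem_range.mp hm') α γ, mul_zero]
      exact hco
    have htop : ∀ α, c b α = 0 := by
      have h0 : (fun α => c b α) = 0 := by
        have h2 := congrArg (fun v => v ᵥ* (Smat vec b)⁻¹) htopv
        simpa [Matrix.vecMul_vecMul, Matrix.mul_nonsing_inv _ (hS b),
          Matrix.vecMul_one, Matrix.zero_vecMul] using h2
      exact fun α => congrFun h0 α
    have hlow : ∑ m' ∈ Finset.range b, ∑ α, c m' α • vec m' α = 0 := by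
      rw [Finset.sum_range_succ] at hsum
      have hz : ∑ α, c b α • vec b α = 0 :=
        Finset.sum_eq_zero fun α _ => by rw [htop α, zero_smul]
      rwa [hz, add_zero] at hsum
    rcases Nat.lt_succ_iff_lt_or_eq.mp hm with h | h
    · exact ih c hlow m h
    · subst h; exact htop

lemma expand_aux (vec : (n : ℕ) → Idx d n → MvP d)
    (h1 : ∀ n α, ∀ ν ∈ (vec n α).support, ∑ i, ν i ≤ n)
    (hS : ∀ n, IsUnit (Smat vec n).det) :
    ∀ (n : ℕ) (p : MvP d), (∀ ν ∈ p.support, ∑ i, ν i < n) →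
      ∃ c : (m : ℕ) → Idx d m → ℝ, p = ∑ m ∈ Finset.range n, ∑ α, c m α • vec m α := by
  intro n
  induction n with
  | zero =>
    intro p hp
    refine ⟨fun _ _ => 0, ?_⟩
    rw [Finset.range_zero, Finset.sum_empty]
    rw [← MvPolynomial.support_eq_empty]
    exact Finset.eq_empty_of_forall_notMem fun ν hν => absurd (hp ν hν) (Nat.not_lt_zero _)
  | succ n ih =>
    intro p hp
    set t : Idx d n → ℝ := fun γ => MvPolynomial.coeff (toF γ) p with ht
    set ctop : Idx d n → ℝ := t ᵥ* (Smat vec n)⁻¹ with hctop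
    have hvS : ctop ᵥ* Smat vec n = t := by
      rw [hctop, Matrix.vecMul_vecMul, Matrix.nonsing_inv_mul _ (hS n), Matrix.vecMul_one]
    have hq : ∀ ν ∈ (p - ∑ α, ctop α • vec n α).support, ∑ i, ν i < n := by
      intro ν hν
      by_contra hge
      push_neg at hge
      apply MvPolynomial.mem_support_iff.mp hν
      rw [MvPolynomial.coeff_sub, coeff_sum_smul_vec]
      rcases hge.lt_or_eq with h | h
      · have h0 : MvPolynomial.coeff ν p = 0 := by
          by_contra hc
          have := hp ν (MvPolynomial.mem_support_iff.mpr hc)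
          omega
        have h0' : ∀ α, MvPolynomial.coeff ν (vec n α) = 0 := fun α => by
          by_contra hc
          have := h1 n α ν (MvPolynomial.mem_support_iff.mpr hc)
          omega
        simp [h0, h0']
      · set δ : Idx d n := ⟨⇑ν, by rw [Finset.Nat.mem_antidiagonalTuple]; exact h.symm⟩ with hδdef
        have hδ : toF δ = ν := by
          simp [toF, hδdef, Finsupp.equivFunOnFinite_symm_coe]
        have hs : ∑ α, ctop α * MvPolynomial.coeff ν (vec n α) = (ctop ᵥ* Smat vec n) δ := by
          rw [← hδ]; rfl
        have hpδ : MvPolynomial.coeff ν p = t δ := by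
          show MvPolynomial.coeff ν p = MvPolynomial.coeff (toF δ) p
          rw [hδ]
        rw [hs, hvS, hpδ, sub_self]
    obtain ⟨c, hc⟩ := ih _ hq
    refine ⟨Function.update c n ctop, ?_⟩
    rw [Finset.sum_range_succ]
    have h2 : ∀ m ∈ Finset.range n,
        ∑ α, Function.update c n ctop m α • vec m α = ∑ α, c m α • vec m α := by
      intro m hm
      rw [Function.update_of_ne (Finset.mem_range.mp hm).ne]
    rw [Finset.sum_congr rfl h2, ← hc, Function.update_self]
    rw [sub_add_cancel]

/-- Construct a polynomial system from degree bounds and invertible leading matrices. -/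
noncomputable def mkPS (vec : (n : ℕ) → Idx d n → MvP d)
    (h1 : ∀ n α, ∀ ν ∈ (vec n α).support, ∑ i, ν i ≤ n)
    (hS : ∀ n, IsUnit (Smat vec n).det) : PolySystem d where
  vec := vec
  degree_eq := by
    intro n α
    apply le_antisymm
    · rw [MvPolynomial.totalDegree]
      apply Finset.sup_le
      intro ν hν
      rw [fsum_eq]
      exact h1 n α ν hν
    · have hrow : ∃ γ : Idx d n, MvPolynomial.coeff (toF γ) (vec n α) ≠ 0 := by
        by_contra h
        push_neg at h
        have hz : (Smat vec n).det = 0 :=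
          Matrix.det_eq_zero_of_row_eq_zero α fun γ => h γ
        have := hS n
        rw [hz] at this
        simpa using this
      obtain ⟨γ, hγ⟩ := hrow
      have := MvPolynomial.le_totalDegree (MvPolynomial.mem_support_iff.mpr hγ)
      rwa [fsum_eq, sum_toF] at this
  indep := by
    rw [linearIndependent_iff']
    intro s g hsum i hi
    classical
    set b : ℕ := (s.sup fun i => i.1) + 1 with hb
    have hlt : ∀ j ∈ s, j.1 < b := fun j hj =>
      Nat.lt_succ_of_le (Finset.le_sup (f := fun i => i.1) hj)
    set g' : (m : ℕ) → Idx d m → ℝ :=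
      fun m α => if (⟨m, α⟩ : Σ n, Idx d n) ∈ s then g ⟨m, α⟩ else 0 with hg'
    have hsub : s ⊆ (Finset.range b).sigma fun _ => Finset.univ := by
      intro j hj
      rw [Finset.mem_sigma]
      exact ⟨Finset.mem_range.mpr (hlt j hj), Finset.mem_univ _⟩
    have hsum' : ∑ m ∈ Finset.range b, ∑ α, g' m α • vec m α = 0 := by
      rw [← Finset.sum_sigma (Finset.range b) (fun _ => Finset.univ)
        (fun j => g' j.1 j.2 • vec j.1 j.2)]
      rw [← Finset.sum_subset hsub ?van]
      case van =>
        intro j _ hjs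
        have : g' j.1 j.2 = 0 := by
          rw [hg']
          simp only [Sigma.eta]
          rw [if_neg hjs]
        rw [this, zero_smul]
      rw [← hsum]
      apply Finset.sum_congr rfl
      intro j hj
      have : g' j.1 j.2 = g j := by
        rw [hg']
        simp only [Sigma.eta]
        rw [if_pos hj]
      rw [this]
    have := indep_aux vec h1 hS b g' hsum' i.1 (hlt i hi) i.2
    rw [hg'] at this
    simp only [Sigma.eta] at this
    rwa [if_pos hi] at this
  spans := by
    intro n p hp
    have hpdeg : ∀ ν ∈ p.support, ∑ i, ν i < n + 1 := by
      intro ν hν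
      have := MvPolynomial.le_totalDegree hν
      rw [fsum_eq] at this
      omega
    obtain ⟨c, hc⟩ := expand_aux vec h1 hS (n + 1) p hpdeg
    rw [hc]
    apply Submodule.sum_mem
    intro m hm
    apply Submodule.sum_mem
    intro α _
    apply Submodule.smul_mem
    exact Submodule.subset_span ⟨m, by
      have := Finset.mem_range.mp hm; omega, α, rfl⟩

@[simp] lemma mkPS_vec (vec : (n : ℕ) → Idx d n → MvP d) (h1) (hS) :
    (mkPS vec h1 hS).vec = vec := rfl

end Uvarov
namespace Uvarov
open Finset

variable {d : ℕ}

noncomputable def Gmat (w : MvP d →ₗ[ℝ] ℝ) (vec : (n : ℕ) → Idx d n → MvP d) (n : ℕ) :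
    Matrix (Idx d n) (Idx d n) ℝ := Matrix.of fun α β => w (monIdx α * vec n β)

lemma vec_sub_lead_support (R : PolySystem d) (n : ℕ) (α : Idx d n) :
    ∀ ν ∈ (R.vec n α - ∑ γ, Smat R.vec n α γ • monIdx γ).support, ∑ i, ν i < n := by
  intro ν hν
  by_contra hge; push_neg at hge
  apply MvPolynomial.mem_support_iff.mp hν
  rw [MvPolynomial.coeff_sub, coeff_sum_smul_vec]
  rcases hge.lt_or_eq with h | h
  · rw [coeff_vec_zero R n α h]
    rw [Finset.sum_eq_zero fun γ _ => ?_, sub_zero]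
    rw [monIdx_eq, MvPolynomial.coeff_monomial, if_neg, mul_zero]
    intro he
    have := sum_toF γ
    rw [show (toF γ : Fin d →₀ ℕ) = ν from he] at this
    omega
  · set δ : Idx d n := ⟨⇑ν, by rw [Finset.Nat.mem_antidiagonalTuple]; exact h.symm⟩ with hδdef
    have hδ : toF δ = ν := by
      simp [toF, hδdef, Finsupp.equivFunOnFinite_symm_coe]
    rw [← hδ, sum_coeff_monIdx (fun γ => Smat R.vec n α γ) δ]
    show Smat R.vec n α δ - Smat R.vec n α δ = 0
    rw [sub_self]

lemma hmat_eq_mul {w : MvP d →ₗ[ℝ] ℝ} {R : PolySystem d}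
    (horth : ∀ m n, m < n → ∀ (α : Idx d m) (β : Idx d n), w (monIdx α * R.vec n β) = 0)
    (n : ℕ) : Hmat w R n = Smat R.vec n * Gmat w R.vec n := by
  ext α β
  rw [Matrix.mul_apply]
  show w (R.vec n α * R.vec n β) = ∑ γ, Smat R.vec n α γ * Gmat w R.vec n γ β
  have hsplit : R.vec n α = (∑ γ, Smat R.vec n α γ • monIdx γ)
      + (R.vec n α - ∑ γ, Smat R.vec n α γ • monIdx γ) := by ring
  conv_lhs => rw [hsplit]
  rw [add_mul, map_add,
    low_mul_apply w (fun m hm α' => horth m n hm α' β) (vec_sub_lead_support R n α), add_zero]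
  rw [Finset.sum_mul, map_sum]
  exact Finset.sum_congr rfl fun γ _ => by
    rw [smul_mul_assoc, _root_.map_smul, smul_eq_mul]; rfl

lemma hmat_isUnit {w : MvP d →ₗ[ℝ] ℝ} {R : PolySystem d} (hR : IsOPS w R) (n : ℕ) :
    IsUnit (Hmat w R n).det := by
  rw [hmat_eq_mul hR.1 n, Matrix.det_mul]
  exact (smat_isUnit R n).mul (hR.2 n)

lemma hmat_symm (w : MvP d →ₗ[ℝ] ℝ) (R : PolySystem d) (n : ℕ) :
    (Hmat w R n)ᵀ = Hmat w R n := by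
  ext α β
  show w (R.vec n β * R.vec n α) = w (R.vec n α * R.vec n β)
  rw [mul_comm]

lemma hmat_inv_symm (w : MvP d →ₗ[ℝ] ℝ) (R : PolySystem d) (n : ℕ) (α β : Idx d n) :
    (Hmat w R n)⁻¹ α β = (Hmat w R n)⁻¹ β α := by
  calc (Hmat w R n)⁻¹ α β = ((Hmat w R n)⁻¹)ᵀ β α := rfl
    _ = (Hmat w R n)⁻¹ β α := by rw [Matrix.transpose_nonsing_inv, hmat_symm]

/-- The kernel polynomial `K_{n-1}(u; y, ·)`. -/
noncomputable def Kpoly (u : MvP d →ₗ[ℝ] ℝ) (P : PolySystem d) (n : ℕ) (y : Fin d → ℝ) :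
    MvP d :=
  ∑ m ∈ Finset.range n, ∑ γ, (∑ α, eval y (P.vec m α) * (Hmat u P m)⁻¹ α γ) • P.vec m γ

lemma kpoly_support (u : MvP d →ₗ[ℝ] ℝ) (P : PolySystem d) (n : ℕ) (y : Fin d → ℝ) :
    ∀ ν ∈ (Kpoly u P n y).support, ∑ i, ν i < n := by
  intro ν hν
  by_contra hge; push_neg at hge
  apply MvPolynomial.mem_support_iff.mp hν
  rw [Kpoly, coeff_range_sum]
  apply Finset.sum_eq_zero; intro m hm
  rw [coeff_sum_smul_vec]
  apply Finset.sum_eq_zero; intro γ _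
  rw [coeff_vec_zero P m γ (by have := Finset.mem_range.mp hm; omega), mul_zero]

lemma eval_kpoly (u : MvP d →ₗ[ℝ] ℝ) (P : PolySystem d) (n : ℕ) (y x : Fin d → ℝ) :
    eval x (Kpoly u P n y) = kerLT u P n y x := by
  rw [Kpoly, kerLT, map_sum]
  refine Finset.sum_congr rfl fun m _ => ?_
  rw [map_sum, kerP, Finset.sum_comm]
  refine Finset.sum_congr rfl fun γ _ => ?_
  rw [MvPolynomial.smul_eval, Finset.sum_mul]

lemma repro {u : MvP d →ₗ[ℝ] ℝ} {P : PolySystem d} (hP : IsOPS u P) (n : ℕ) {p : MvP d}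
    (hp : ∀ ν ∈ p.support, ∑ i, ν i < n) (y : Fin d → ℝ) :
    u (p * Kpoly u P n y) = eval y p := by
  obtain ⟨c, hc⟩ := expand_aux P.vec (fun n α ν h => support_sum_le P n α h)
    (smat_isUnit P) n p hp
  have hupm : ∀ m ∈ Finset.range n, ∀ γ : Idx d m,
      u (p * P.vec m γ) = (c m ᵥ* Hmat u P m) γ := by
    intro m hm γ
    conv_lhs => rw [hc]
    rw [Finset.sum_mul, map_sum]
    rw [Finset.sum_eq_single_of_mem m hm (fun k _ hk => ?_)]
    · rw [Finset.sum_mul, map_sum]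
      show _ = ∑ β, c m β * Hmat u P m β γ
      exact Finset.sum_congr rfl fun β _ => by
        rw [smul_mul_assoc, _root_.map_smul, smul_eq_mul]
        rfl
    · rw [Finset.sum_mul, map_sum]
      exact Finset.sum_eq_zero fun β _ => by
        rw [smul_mul_assoc, _root_.map_smul, smul_eq_mul, vec_mul_vec hP hk, mul_zero]
  rw [Kpoly, Finset.mul_sum, map_sum]
  have hterm : ∀ m ∈ Finset.range n,
      u (p * ∑ γ, (∑ α, eval y (P.vec m α) * (Hmat u P m)⁻¹ α γ) • P.vec m γ)
        = ∑ α, eval y (P.vec m α) * c m α := by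
    intro m hm
    rw [Finset.mul_sum, map_sum]
    have h1 : ∀ γ : Idx d m, u (p * ((∑ α, eval y (P.vec m α) * (Hmat u P m)⁻¹ α γ) • P.vec m γ))
        = ((fun α => eval y (P.vec m α)) ᵥ* (Hmat u P m)⁻¹) γ * (c m ᵥ* Hmat u P m) γ := by
      intro γ
      rw [mul_smul_comm, _root_.map_smul, smul_eq_mul, hupm m hm γ]
      rfl
    rw [Finset.sum_congr rfl fun γ _ => h1 γ]
    have hdot : ∑ γ, ((fun α => eval y (P.vec m α)) ᵥ* (Hmat u P m)⁻¹) γ * (c m ᵥ* Hmat u P m) γ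
        = ((fun α => eval y (P.vec m α)) ᵥ* (Hmat u P m)⁻¹) ⬝ᵥ (c m ᵥ* Hmat u P m) := rfl
    rw [hdot, ← Matrix.dotProduct_mulVec, ← Matrix.mulVec_transpose,
      Matrix.mulVec_mulVec, hmat_symm, Matrix.nonsing_inv_mul _ (hmat_isUnit hP m),
      Matrix.one_mulVec]
    rfl
  rw [Finset.sum_congr rfl hterm]
  conv_rhs => rw [hc]
  rw [map_sum]
  apply Finset.sum_congr rfl; intro m _
  rw [map_sum]
  exact Finset.sum_congr rfl fun α _ => by rw [MvPolynomial.smul_eval, mul_comm]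

lemma expand_top {u : MvP d →ₗ[ℝ] ℝ} {P : PolySystem d} (hP : IsOPS u P) {n : ℕ} {q : MvP d}
    (hsupp : ∀ ν ∈ q.support, ∑ i, ν i < n + 1)
    (horth : ∀ k, k < n → ∀ γ : Idx d k, u (P.vec k γ * q) = 0) :
    ∃ c : Idx d n → ℝ, q = ∑ γ, c γ • P.vec n γ := by
  obtain ⟨c, hc⟩ := expand_aux P.vec (fun n α ν h => support_sum_le P n α h)
    (smat_isUnit P) (n + 1) q hsupp
  have hzero : ∀ k, k < n → ∀ β, c k β = 0 := by
    intro k hk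
    have hvm : Hmat u P k *ᵥ c k = 0 := by
      funext γ
      have h0 := horth k hk γ
      conv_lhs at h0 => rw [hc]
      rw [Finset.mul_sum, map_sum] at h0
      rw [Finset.sum_eq_single_of_mem k (Finset.mem_range.mpr (by omega))
        (fun k' _ hk' => ?_)] at h0
      · show ∑ β, Hmat u P k γ β * c k β = 0
        rw [← h0, Finset.mul_sum, map_sum]
        exact Finset.sum_congr rfl fun β _ => by
          rw [mul_comm (P.vec k γ), smul_mul_assoc, _root_.map_smul, smul_eq_mul,
            mul_comm (P.vec k β) (P.vec k γ)]
          exact mul_comm _ _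
      · rw [Finset.mul_sum, map_sum]
        exact Finset.sum_eq_zero fun β _ => by
          rw [mul_comm (P.vec k γ), smul_mul_assoc, _root_.map_smul, smul_eq_mul,
            mul_comm (P.vec k' β) (P.vec k γ), vec_mul_vec hP (Ne.symm hk'), mul_zero]
    intro β
    have : c k = (Hmat u P k)⁻¹ *ᵥ (Hmat u P k *ᵥ c k) := by
      rw [Matrix.mulVec_mulVec, Matrix.nonsing_inv_mul _ (hmat_isUnit hP k), Matrix.one_mulVec]
    rw [hvm, Matrix.mulVec_zero] at this
    rw [this]
    rfl
  refine ⟨c n, ?_⟩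
  rw [hc, Finset.sum_range_succ]
  rw [Finset.sum_eq_zero fun m hm => Finset.sum_eq_zero fun β _ => by
    rw [hzero m (Finset.mem_range.mp hm) β, zero_smul], zero_add]

lemma kerP_symm (u : MvP d →ₗ[ℝ] ℝ) (P : PolySystem d) (m : ℕ) (x y : Fin d → ℝ) :
    kerP u P m x y = kerP u P m y x := by
  rw [kerP, kerP, Finset.sum_comm]
  apply Finset.sum_congr rfl; intro β _
  apply Finset.sum_congr rfl; intro α _
  rw [hmat_inv_symm u P m α β]
  ring

lemma kerLT_symm (u : MvP d →ₗ[ℝ] ℝ) (P : PolySystem d) (n : ℕ) (x y : Fin d → ℝ) :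
    kerLT u P n x y = kerLT u P n y x :=
  Finset.sum_congr rfl fun m _ => kerP_symm u P m x y

end Uvarov
namespace Uvarov
open Finset

variable {d : ℕ}

lemma exists_transition {u : MvP d →ₗ[ℝ] ℝ} {P R : PolySystem d} (hP : IsOPS u P)
    (horth : ∀ m n, m < n → ∀ (α : Idx d m) (β : Idx d n), u (monIdx α * R.vec n β) = 0)
    (n : ℕ) :
    ∃ C : Matrix (Idx d n) (Idx d n) ℝ, ∀ β, R.vec n β = ∑ γ, C β γ • P.vec n γ := by
  have h : ∀ β : Idx d n, ∃ cβ : Idx d n → ℝ, R.vec n β = ∑ γ, cβ γ • P.vec n γ := by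
    intro β
    apply expand_top hP
    · intro ν hν
      have := support_sum_le R n β hν
      omega
    · intro k hk γ
      exact low_mul_apply u (fun m hm α => horth m n hm α β)
        (fun ν hν => lt_of_le_of_lt (support_sum_le P k γ hν) hk)
  choose C hC using h
  exact ⟨Matrix.of C, hC⟩

lemma trans_smat {P R : PolySystem d} {n : ℕ} {C : Matrix (Idx d n) (Idx d n) ℝ}
    (hC : ∀ β, R.vec n β = ∑ γ, C β γ • P.vec n γ) :
    Smat R.vec n = C * Smat P.vec n := by
  ext β δ
  rw [Matrix.mul_apply]
  show MvPolynomial.coeff (toF δ) (R.vec n β) = _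
  rw [hC β, coeff_sum_smul_vec]
  rfl

lemma trans_isUnit {P R : PolySystem d} {n : ℕ} {C : Matrix (Idx d n) (Idx d n) ℝ}
    (hC : ∀ β, R.vec n β = ∑ γ, C β γ • P.vec n γ) : IsUnit C.det := by
  have h := trans_smat hC
  have hdet : (Smat R.vec n).det = C.det * (Smat P.vec n).det := by
    rw [h, Matrix.det_mul]
  exact isUnit_of_mul_isUnit_left (hdet ▸ smat_isUnit R n)

lemma trans_hmat {u : MvP d →ₗ[ℝ] ℝ} {P R : PolySystem d} {n : ℕ}
    {C : Matrix (Idx d n) (Idx d n) ℝ}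
    (hC : ∀ β, R.vec n β = ∑ γ, C β γ • P.vec n γ) :
    Hmat u R n = C * Hmat u P n * Cᵀ := by
  ext α β
  calc Hmat u R n α β
      = ∑ γ, ∑ δ, C α γ * C β δ * u (P.vec n γ * P.vec n δ) := by
        show u (R.vec n α * R.vec n β) = _
        rw [hC α, hC β, Finset.sum_mul, map_sum]
        refine Finset.sum_congr rfl fun γ _ => ?_
        rw [Finset.mul_sum, map_sum]
        refine Finset.sum_congr rfl fun δ _ => ?_
        rw [smul_mul_assoc, mul_smul_comm, _root_.map_smul, _root_.map_smul,
          smul_eq_mul, smul_eq_mul]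
        ring
    _ = (C * Hmat u P n * Cᵀ) α β := by
        rw [Matrix.mul_apply, Finset.sum_comm]
        refine Finset.sum_congr rfl fun δ _ => ?_
        rw [Matrix.mul_apply, Finset.sum_mul]
        refine Finset.sum_congr rfl fun γ _ => ?_
        rw [Matrix.transpose_apply]
        show _ = C α γ * u (P.vec n γ * P.vec n δ) * C β δ
        ring

lemma trans_eval {P R : PolySystem d} {n : ℕ} {C : Matrix (Idx d n) (Idx d n) ℝ}
    (hC : ∀ β, R.vec n β = ∑ γ, C β γ • P.vec n γ) (z : Fin d → ℝ) :
    (fun β => eval z (R.vec n β)) = C *ᵥ (fun γ => eval z (P.vec n γ)) := by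
  funext β
  rw [hC β, map_sum]
  show ∑ γ, eval z (C β γ • P.vec n γ) = ∑ γ, C β γ * eval z (P.vec n γ)
  exact Finset.sum_congr rfl fun γ _ => MvPolynomial.smul_eval _ _ _

lemma kerP_dot (u : MvP d →ₗ[ℝ] ℝ) (P : PolySystem d) (m : ℕ) (x y : Fin d → ℝ) :
    kerP u P m x y
      = (fun α => eval x (P.vec m α)) ⬝ᵥ ((Hmat u P m)⁻¹ *ᵥ fun β => eval y (P.vec m β)) := by
  rw [kerP]
  show _ = ∑ α, eval x (P.vec m α) * ∑ β, (Hmat u P m)⁻¹ α β * eval y (P.vec m β)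
  refine Finset.sum_congr rfl fun α _ => ?_
  rw [Finset.mul_sum]
  refine Finset.sum_congr rfl fun β _ => by ring

lemma kerP_invariant {u : MvP d →ₗ[ℝ] ℝ} {P R : PolySystem d} (hP : IsOPS u P)
    (hR : IsOPS u R) (m : ℕ) (x y : Fin d → ℝ) : kerP u R m x y = kerP u P m x y := by
  obtain ⟨C, hC⟩ := exists_transition hP hR.1 m
  have hCu : IsUnit C.det := trans_isUnit hC
  have hCt : IsUnit Cᵀ.det := by rw [Matrix.det_transpose]; exact hCu
  have hH : Hmat u R m = C * Hmat u P m * Cᵀ := trans_hmat hC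
  rw [kerP_dot, kerP_dot, trans_eval hC x, trans_eval hC y, hH]
  have hinv : (C * Hmat u P m * Cᵀ)⁻¹ = Cᵀ⁻¹ * ((Hmat u P m)⁻¹ * C⁻¹) := by
    rw [Matrix.mul_inv_rev, Matrix.mul_inv_rev]
  rw [hinv, Matrix.mulVec_mulVec]
  have hcomm : ∀ w : Idx d m → ℝ,
      (C *ᵥ (fun α => eval x (P.vec m α))) ⬝ᵥ w = (fun α => eval x (P.vec m α)) ⬝ᵥ (Cᵀ *ᵥ w) := by
    intro w
    rw [dotProduct_comm, Matrix.dotProduct_mulVec, Matrix.mulVec_transpose,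
      dotProduct_comm]
  rw [hcomm, Matrix.mulVec_mulVec]
  have hfin : Cᵀ * (Cᵀ⁻¹ * ((Hmat u P m)⁻¹ * C⁻¹) * C) = (Hmat u P m)⁻¹ := by
    rw [← mul_assoc, ← mul_assoc, Matrix.mul_nonsing_inv _ hCt, one_mul, mul_assoc,
      Matrix.nonsing_inv_mul _ hCu, mul_one]
  rw [hfin]

lemma kerLT_invariant {u : MvP d →ₗ[ℝ] ℝ} {P R : PolySystem d} (hP : IsOPS u P)
    (hR : IsOPS u R) (n : ℕ) (x y : Fin d → ℝ) : kerLT u R n x y = kerLT u P n x y :=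
  Finset.sum_congr rfl fun m _ => kerP_invariant hP hR m x y

lemma coeff_kpoly_zero (u : MvP d →ₗ[ℝ] ℝ) (P : PolySystem d) (n : ℕ) (y : Fin d → ℝ)
    {ν : Fin d →₀ ℕ} (h : n ≤ ∑ i, ν i) : MvPolynomial.coeff ν (Kpoly u P n y) = 0 := by
  by_contra hc
  have := kpoly_support u P n y ν (MvPolynomial.mem_support_iff.mpr hc)
  omega

lemma kill_coeffs {w : MvP d →ₗ[ℝ] ℝ} {R : PolySystem d} (hR : IsOPS w R) {n : ℕ} {q : MvP d}
    {c : (m : ℕ) → Idx d m → ℝ} (hc : q = ∑ m ∈ Finset.range n, ∑ α, c m α • R.vec m α)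
    (horth : ∀ k, k < n → ∀ γ : Idx d k, w (R.vec k γ * q) = 0) : q = 0 := by
  have hzero : ∀ k, k < n → ∀ β, c k β = 0 := by
    intro k hk
    have hvm : Hmat w R k *ᵥ c k = 0 := by
      funext γ
      have h0 := horth k hk γ
      conv_lhs at h0 => rw [hc]
      rw [Finset.mul_sum, map_sum] at h0
      rw [Finset.sum_eq_single_of_mem k (Finset.mem_range.mpr hk) (fun k' _ hk' => ?_)] at h0
      · show ∑ β, Hmat w R k γ β * c k β = 0
        rw [← h0, Finset.mul_sum, map_sum]
        exact Finset.sum_congr rfl fun β _ => by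
          rw [mul_comm (R.vec k γ), smul_mul_assoc, _root_.map_smul, smul_eq_mul,
            mul_comm (R.vec k β) (R.vec k γ)]
          exact mul_comm _ _
      · rw [Finset.mul_sum, map_sum]
        exact Finset.sum_eq_zero fun β _ => by
          rw [mul_comm (R.vec k γ), smul_mul_assoc, _root_.map_smul, smul_eq_mul,
            mul_comm (R.vec k' β) (R.vec k γ), vec_mul_vec hR (Ne.symm hk'), mul_zero]
    intro β
    have hck : c k = (Hmat w R k)⁻¹ *ᵥ (Hmat w R k *ᵥ c k) := by
      rw [Matrix.mulVec_mulVec, Matrix.nonsing_inv_mul _ (hmat_isUnit hR k),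
        Matrix.one_mulVec]
    rw [hvm, Matrix.mulVec_zero] at hck
    rw [hck]
    rfl
  rw [hc]
  exact Finset.sum_eq_zero fun m hm => Finset.sum_eq_zero fun β _ => by
    rw [hzero m (Finset.mem_range.mp hm) β, zero_smul]

end Uvarov
namespace Uvarov
open Finset

variable {d : ℕ}

lemma kmat_apply {N : ℕ} (u : MvP d →ₗ[ℝ] ℝ) (P : PolySystem d) (ξ : Fin N → Fin d → ℝ)
    (n : ℕ) (i j : Fin N) : Kmat u P ξ n i j = kerLT u P n (ξ i) (ξ j) := rfl

lemma part_i {N : ℕ} {u v : MvP d →ₗ[ℝ] ℝ} {ξ : Fin N → (Fin d → ℝ)} {lam : Fin N → ℝ}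
    (hv : ∀ p : MvP d, v p = u p + ∑ i, lam i * eval (ξ i) p)
    {P : PolySystem d} (hP : IsOPS u P) (hvqd : QuasiDefinite v) (n : ℕ) :
    IsUnit (1 + Matrix.diagonal lam * Kmat u P ξ n).det := by
  rw [isUnit_iff_ne_zero]
  intro hdet
  obtain ⟨c, hc0, hMc⟩ := Matrix.exists_mulVec_eq_zero_iff.mpr hdet
  apply hc0
  set q : MvP d := ∑ j, c j • Kpoly u P n (ξ j) with hqdef
  have hqsupp : ∀ ν ∈ q.support, ∑ i, ν i < n := by
    intro ν hν
    by_contra hge; push_neg at hge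
    apply MvPolynomial.mem_support_iff.mp hν
    rw [hqdef, MvPolynomial.coeff_sum]
    exact Finset.sum_eq_zero fun j _ => by
      rw [MvPolynomial.coeff_smul, coeff_kpoly_zero u P n _ hge, smul_zero]
  have hqev : ∀ i, eval (ξ i) q = (Kmat u P ξ n *ᵥ c) i := by
    intro i
    rw [hqdef, map_sum]
    show ∑ j, eval (ξ i) (c j • Kpoly u P n (ξ j)) = ∑ j, Kmat u P ξ n i j * c j
    refine Finset.sum_congr rfl fun j _ => ?_
    rw [MvPolynomial.smul_eval, eval_kpoly, kmat_apply, kerLT_symm]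
    ring
  have hmc : ∀ i, c i + lam i * (Kmat u P ξ n *ᵥ c) i = 0 := by
    intro i
    have h := congrFun hMc i
    rw [Matrix.add_mulVec, Matrix.one_mulVec, ← Matrix.mulVec_mulVec] at h
    have h2 : (c + Matrix.diagonal lam *ᵥ (Kmat u P ξ n *ᵥ c)) i
        = c i + lam i * (Kmat u P ξ n *ᵥ c) i := by
      rw [Pi.add_apply, Matrix.mulVec_diagonal]
    rw [← h2, h]
    rfl
  have h0 : ∀ p : MvP d, (∀ ν ∈ p.support, ∑ i, ν i < n) → v (p * q) = 0 := by
    intro p hp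
    rw [hv]
    have hu : u (p * q) = ∑ j, c j * eval (ξ j) p := by
      rw [hqdef, Finset.mul_sum, map_sum]
      refine Finset.sum_congr rfl fun j _ => ?_
      rw [mul_smul_comm, _root_.map_smul, smul_eq_mul, repro hP n hp]
    have hev : ∑ i, lam i * eval (ξ i) (p * q)
        = ∑ i, lam i * (eval (ξ i) p * (Kmat u P ξ n *ᵥ c) i) :=
      Finset.sum_congr rfl fun i _ => by rw [_root_.map_mul, hqev i]
    rw [hu, hev, ← Finset.sum_add_distrib]
    apply Finset.sum_eq_zero
    intro i _
    calc c i * eval (ξ i) p + lam i * (eval (ξ i) p * (Kmat u P ξ n *ᵥ c) i)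
        = eval (ξ i) p * (c i + lam i * (Kmat u P ξ n *ᵥ c) i) := by ring
      _ = 0 := by rw [hmc i, mul_zero]
  obtain ⟨Q₀, hQ₀⟩ := hvqd
  obtain ⟨c', hc'⟩ := expand_aux Q₀.vec (fun n α ν h => support_sum_le Q₀ n α h)
    (smat_isUnit Q₀) n q hqsupp
  have hq0 : q = 0 := kill_coeffs hQ₀ hc' (fun k hk γ => h0 (Q₀.vec k γ)
    (fun ν hν => lt_of_le_of_lt (support_sum_le Q₀ k γ hν) hk))
  have hKc : Kmat u P ξ n *ᵥ c = 0 := by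
    funext i
    rw [← hqev i, hq0, map_zero]
    rfl
  funext i
  have h := hmc i
  rw [hKc] at h
  simpa using h

end Uvarov
namespace Uvarov
open Finset

variable {d : ℕ}

lemma monIdx_support_lt {n m : ℕ} (hmn : m < n) (α : Idx d m) :
    ∀ ν ∈ (monIdx α).support, ∑ i, ν i < n := by
  intro ν hν
  have hc := MvPolynomial.mem_support_iff.mp hν
  rw [monIdx_eq, MvPolynomial.coeff_monomial] at hc
  by_cases h : toF α = ν
  · rw [← h, sum_toF]
    omega
  · rw [if_neg h] at hc
    exact absurd rfl hc

end Uvarov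

open Finset Uvarov

/-- Theorem 3.1, necessity. Let `u` be a quasi-definite moment
functional on `Π^d` and let `v` be its Uvarov modification at `N` distinct points
`ξ_1,…,ξ_N` with nonzero masses `λ_1,…,λ_N`.  If `v` is quasi-definite, then
(i) `I_N + Λ𝒦_{n-1}` is invertible for every `n ≥ 1`; (ii) any OPS `{ℚ_n}` for `v`
can be written as `ℚ_0 = ℙ_0`, `ℚ_n(x) = ℙ_n(x) - 𝖯_n(ξ)(I_N + Λ𝒦_{n-1})⁻¹ Λ 𝖪_{n-1}(ξ,x)`
for some OPS `{ℙ_n}` of `u`; and (iii) the nonsingular matrices `Ĥ_n = ⟨v,ℚ_nℚ_n^t⟩`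
satisfy `Ĥ_n = H_n + 𝖯_n(ξ)(I_N + Λ𝒦_{n-1})⁻¹ Λ 𝖯_n(ξ)^t`. -/
theorem uvarov_necessity
    {d N : ℕ} (hd : 1 ≤ d) (hN : 1 ≤ N)
    (u v : MvPolynomial (Fin d) ℝ →ₗ[ℝ] ℝ)
    (ξ : Fin N → (Fin d → ℝ)) (hξ : Function.Injective ξ)
    (lam : Fin N → ℝ) (hlam : ∀ i, lam i ≠ 0)
    (hv : ∀ p : MvPolynomial (Fin d) ℝ, v p = u p + ∑ i, lam i * eval (ξ i) p)
    (P : PolySystem d) (hP : IsOPS u P)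
    (hvqd : QuasiDefinite v) :
    (∀ n : ℕ, 1 ≤ n → IsUnit (1 + Matrix.diagonal lam * Kmat u P ξ n).det) ∧
    (∀ Q : PolySystem d, IsOPS v Q →
      ∃ P' : PolySystem d, IsOPS u P' ∧
        Q.vec 0 = P'.vec 0 ∧
        (∀ n : ℕ, 1 ≤ n → ∀ (β : Idx d n) (x : Fin d → ℝ),
          eval x (Q.vec n β) = eval x (P'.vec n β) -
            ∑ i, (Pmat P' ξ n * (1 + Matrix.diagonal lam * Kmat u P' ξ n)⁻¹ *
                Matrix.diagonal lam) β i * Kvec u P' ξ n x i) ∧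
        (∀ n : ℕ, IsUnit (Hmat v Q n).det ∧
          Hmat v Q n = Hmat u P' n +
            Pmat P' ξ n * (1 + Matrix.diagonal lam * Kmat u P' ξ n)⁻¹ *
              Matrix.diagonal lam * (Pmat P' ξ n)ᵀ)) := by
  classical
  refine ⟨fun n _ => part_i hv hP hvqd n, ?_⟩
  intro Q hQ
  set corr : (n : ℕ) → Idx d n → MvPolynomial (Fin d) ℝ := fun n β =>
    ∑ i, (lam i * eval (ξ i) (Q.vec n β)) • Kpoly u P n (ξ i) with hcorr
  have hcorrsupp : ∀ n (β : Idx d n), ∀ ν ∈ (corr n β).support, ∑ i, ν i < n := by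
    intro n β ν hν
    by_contra hge; push_neg at hge
    apply MvPolynomial.mem_support_iff.mp hν
    rw [hcorr, MvPolynomial.coeff_sum]
    exact Finset.sum_eq_zero fun i _ => by
      rw [MvPolynomial.coeff_smul, coeff_kpoly_zero u P n _ hge, smul_zero]
  set vec' : (n : ℕ) → Idx d n → MvPolynomial (Fin d) ℝ :=
    fun n β => Q.vec n β + corr n β with hvec'
  have h1' : ∀ n (α : Idx d n), ∀ ν ∈ (vec' n α).support, ∑ i, ν i ≤ n := by
    intro n α ν hν
    by_contra hgt; push_neg at hgt
    apply MvPolynomial.mem_support_iff.mp hν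
    have hcz : MvPolynomial.coeff ν (corr n α) = 0 := by
      by_contra hc
      have := hcorrsupp n α ν (MvPolynomial.mem_support_iff.mpr hc)
      omega
    rw [hvec', MvPolynomial.coeff_add, coeff_vec_zero Q n α hgt, hcz, add_zero]
  have hS'eq : ∀ n, Smat vec' n = Smat Q.vec n := by
    intro n; ext α γ
    show MvPolynomial.coeff (toF γ) (vec' n α) = MvPolynomial.coeff (toF γ) (Q.vec n α)
    have hcz : MvPolynomial.coeff (toF γ) (corr n α) = 0 := by
      by_contra hc
      have := hcorrsupp n α _ (MvPolynomial.mem_support_iff.mpr hc)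
      rw [sum_toF] at this
      omega
    rw [hvec', MvPolynomial.coeff_add, hcz, add_zero]
  have hS' : ∀ n, IsUnit (Smat vec' n).det := fun n => by
    rw [hS'eq n]; exact smat_isUnit Q n
  set P' : PolySystem d := mkPS vec' h1' hS' with hP'def
  have hvecP' : ∀ n β, P'.vec n β = Q.vec n β + corr n β := fun n β => rfl
  have horthP' : ∀ m n, m < n → ∀ (α : Idx d m) (β : Idx d n),
      u (monIdx α * P'.vec n β) = 0 := by
    intro m n hmn α β
    show u (monIdx α * (Q.vec n β + corr n β)) = 0
    rw [mul_add, map_add]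
    have hterm2 : u (monIdx α * corr n β)
        = ∑ i, (lam i * eval (ξ i) (Q.vec n β)) * eval (ξ i) (monIdx α) := by
      show u (monIdx α * ∑ i, (lam i * eval (ξ i) (Q.vec n β)) • Kpoly u P n (ξ i)) = _
      rw [Finset.mul_sum, map_sum]
      refine Finset.sum_congr rfl fun i _ => ?_
      rw [mul_smul_comm, _root_.map_smul, smul_eq_mul,
        repro hP n (monIdx_support_lt hmn α) (ξ i)]
    have h := hv (monIdx α * Q.vec n β)
    rw [hQ.1 m n hmn α β] at h
    simp only [_root_.map_mul] at h
    have hterm1 : u (monIdx α * Q.vec n β)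
        = - ∑ i, lam i * (eval (ξ i) (monIdx α) * eval (ξ i) (Q.vec n β)) :=
      eq_neg_of_add_eq_zero_left h.symm
    rw [hterm1, hterm2]
    rw [show (∑ i, (lam i * eval (ξ i) (Q.vec n β)) * eval (ξ i) (monIdx α))
        = ∑ i, lam i * (eval (ξ i) (monIdx α) * eval (ξ i) (Q.vec n β)) from
      Finset.sum_congr rfl fun i _ => by ring]
    exact neg_add_cancel _
  have hOPSP' : IsOPS u P' := by
    refine ⟨horthP', fun n => ?_⟩
    obtain ⟨C, hC⟩ := exists_transition hP horthP' n
    have hCu := trans_isUnit (P := P) (R := P') hC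
    have hH := trans_hmat (u := u) (P := P) (R := P') hC
    have hHu : IsUnit (Hmat u P' n).det := by
      rw [hH, Matrix.det_mul, Matrix.det_mul, Matrix.det_transpose]
      exact (hCu.mul (hmat_isUnit hP n)).mul hCu
    have hSG : (Hmat u P' n).det = (Smat P'.vec n).det * (Gmat u P'.vec n).det := by
      rw [hmat_eq_mul horthP' n, Matrix.det_mul]
    exact isUnit_of_mul_isUnit_right (hSG ▸ hHu)
  have hQ0 : Q.vec 0 = P'.vec 0 := by
    funext β
    rw [hvecP']
    have : corr 0 β = 0 := by
      simp [hcorr, Kpoly]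
    rw [this, add_zero]
  have hker : ∀ n x y, kerLT u P' n x y = kerLT u P n x y :=
    fun n x y => kerLT_invariant hP hOPSP' n x y
  have hKmat : ∀ n, Kmat u P' ξ n = Kmat u P ξ n := fun n => by
    ext i j
    exact hker n (ξ i) (ξ j)
  have hevcorr : ∀ n (β : Idx d n) (x : Fin d → ℝ), eval x (corr n β)
      = ∑ i, (lam i * eval (ξ i) (Q.vec n β)) * kerLT u P n (ξ i) x := by
    intro n β x
    rw [hcorr, map_sum]
    exact Finset.sum_congr rfl fun i _ => by
      rw [MvPolynomial.smul_eval, eval_kpoly]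
  have hA : ∀ n, Pmat P' ξ n = (Matrix.of fun (β : Idx d n) i => eval (ξ i) (Q.vec n β))
      * (1 + Matrix.diagonal lam * Kmat u P ξ n) := by
    intro n
    ext β i
    rw [Matrix.mul_apply]
    show eval (ξ i) (P'.vec n β)
      = ∑ j, eval (ξ j) (Q.vec n β) * (1 + Matrix.diagonal lam * Kmat u P ξ n) j i
    rw [hvecP', map_add, hevcorr]
    have hrhs : ∑ j, eval (ξ j) (Q.vec n β) * (1 + Matrix.diagonal lam * Kmat u P ξ n) j i
        = (∑ j, eval (ξ j) (Q.vec n β) * (if j = i then (1:ℝ) else 0))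
          + ∑ j, eval (ξ j) (Q.vec n β) * (lam j * Kmat u P ξ n j i) := by
      rw [← Finset.sum_add_distrib]
      refine Finset.sum_congr rfl fun j _ => ?_
      rw [Matrix.add_apply, Matrix.one_apply, Matrix.diagonal_mul, mul_add]
    have h1 : ∑ j, eval (ξ j) (Q.vec n β) * (if j = i then (1:ℝ) else 0)
        = eval (ξ i) (Q.vec n β) := by
      rw [Finset.sum_eq_single i]
      · rw [if_pos rfl, mul_one]
      · intro j _ hj
        rw [if_neg hj, mul_zero]
      · simp
    rw [hrhs, h1]
    congr 1
    refine Finset.sum_congr rfl fun j _ => ?_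
    rw [show Kmat u P ξ n j i = kerLT u P n (ξ j) (ξ i) from rfl]
    ring
  have hInv : ∀ n, IsUnit (1 + Matrix.diagonal lam * Kmat u P ξ n).det :=
    fun n => part_i hv hP hvqd n
  have hQA : ∀ n, Pmat P' ξ n * (1 + Matrix.diagonal lam * Kmat u P' ξ n)⁻¹
      = Matrix.of fun (β : Idx d n) i => eval (ξ i) (Q.vec n β) := by
    intro n
    rw [hKmat n, hA n, Matrix.mul_assoc, Matrix.mul_nonsing_inv _ (hInv n), Matrix.mul_one]
  refine ⟨P', hOPSP', hQ0, ?_, ?_⟩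
  · -- part (ii)
    intro n hn β x
    have hmatentry : ∀ i, (Pmat P' ξ n * (1 + Matrix.diagonal lam * Kmat u P' ξ n)⁻¹ *
        Matrix.diagonal lam) β i = eval (ξ i) (Q.vec n β) * lam i := by
      intro i
      rw [hQA n, Matrix.mul_diagonal]
      rfl
    have hS'sum : ∑ i, (Pmat P' ξ n * (1 + Matrix.diagonal lam * Kmat u P' ξ n)⁻¹ *
        Matrix.diagonal lam) β i * Kvec u P' ξ n x i
        = ∑ i, lam i * eval (ξ i) (Q.vec n β) * kerLT u P n (ξ i) x := by
      refine Finset.sum_congr rfl fun i _ => ?_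
      rw [hmatentry i, show Kvec u P' ξ n x i = kerLT u P n (ξ i) x from hker n (ξ i) x]
      ring
    rw [hvecP', map_add, hevcorr, hS'sum, add_sub_cancel_right]
  · -- part (iii)
    intro n
    refine ⟨hmat_isUnit hQ n, ?_⟩
    rw [hQA n]
    ext α β
    rw [Matrix.add_apply]
    have hentry : (Matrix.of (fun (γ : Idx d n) i => eval (ξ i) (Q.vec n γ))
        * Matrix.diagonal lam * (Pmat P' ξ n)ᵀ) α β
        = ∑ i, eval (ξ i) (Q.vec n α) * lam i * eval (ξ i) (P'.vec n β) := by
      rw [Matrix.mul_apply]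
      refine Finset.sum_congr rfl fun i _ => ?_
      rw [Matrix.mul_diagonal, Matrix.transpose_apply]
      rfl
    rw [hentry]
    have hsub : ∀ γ : Idx d n, Q.vec n γ = P'.vec n γ - corr n γ := by
      intro γ
      rw [hvecP', add_sub_cancel_right]
    show v (Q.vec n α * Q.vec n β) = Hmat u P' n α β + _
    have hQcorr : v (Q.vec n α * corr n β) = 0 := by
      rw [mul_comm]
      exact low_mul_apply v (fun m hm γ => hQ.1 m n hm γ α) (hcorrsupp n β)
    have hsplit1 : v (Q.vec n α * Q.vec n β) = v (Q.vec n α * P'.vec n β) := by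
      conv_lhs => rw [hsub β]
      rw [mul_sub, map_sub, hQcorr, sub_zero]
    have hcorrP' : u (corr n α * P'.vec n β) = 0 :=
      low_mul_apply u (fun m hm γ => horthP' m n hm γ β) (hcorrsupp n α)
    have hu1 : u (Q.vec n α * P'.vec n β) = Hmat u P' n α β := by
      conv_lhs => rw [hsub α]
      rw [sub_mul, map_sub, hcorrP', sub_zero]
      rfl
    rw [hsplit1, hv, hu1]
    congr 1
    refine Finset.sum_congr rfl fun i _ => ?_
    rw [_root_.map_mul]
    ring
end

section
/- Let u be a quasi-definite moment functional on Π^d with OPS {ℙ_n} and let v be its Uvarov modification at N distinct points ξ_1,…,ξ_N with nonzero masses λ_1,…,λ_N. Suppose that for every n ≥ 1 the matrix I_N + Λ𝒦_{n−1} is invertible and that for every n ≥ 0 the matrix Ĥ_n = H_n + 𝖯_n(ξ)(I_N + Λ𝒦_{n−1})^{−1} Λ 𝖯_n(ξ)^t is invertible (for n = 0 read 𝒦_{−1} = 0). Then the polynomial vectors defined by ℚ_0 = ℙ_0 and ℚ_n(x) = ℙ_n(x) − 𝖯_n(ξ)(I_N + Λ𝒦_{n−1})^{−1} Λ 𝖪_{n−1}(ξ,x)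 for n ≥ 1 form an OPS with respect to v; in particular v is quasi-definite. -/
open MvPolynomial Matrix

/-! For `deg p < n` the kernel reproduces point values, `⟨u, p K_{n-1}(x, ·)⟩ = p(x)`. Put
`M = 𝖯_n(ξ)(I_N + Λ𝒦_{n-1})⁻¹Λ`, so that `ℚ_n = ℙ_n - M 𝖪_{n-1}(ξ, ·)`. Then
`(𝖯_n(ξ) - M𝒦_{n-1})Λ = M`, i.e. `λ_j ℚ_n(ξ_j)` is the `j`-th column of `M`; hence for
`deg p < n` the point masses in `⟨v, p ℚ_n^t⟩` cancel exactly the term `-Σ_i p(ξ_i) M_{·,i}` that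
the reproducing property produces in `⟨u, p ℚ_n^t⟩`. The same computation gives
`⟨v, ℚ_n ℚ_n^t⟩ = Ĥ_n`. Since `ℚ_n` and `𝕏_n` both span the polynomials of degree `≤ n` modulo
those of lower degree, which are `v`-orthogonal to `ℚ_n`, invertibility passes from
`⟨v, ℚ_n ℚ_n^t⟩` to `⟨v, 𝕏_n ℚ_n^t⟩`; the same argument shows that `H_n` is invertible. Finally
`ℚ_n - ℙ_n` lies in the span of `ℙ_0, …, ℙ_{n-1}`, so `{ℚ_n}` is again a polynomial system. -/

open Finset Submodule

section GradedFamily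

variable {R M : Type*} [Semiring R] [AddCommMonoid M] [Module R M] {ι : ℕ → Type*}

variable (R) in
def spanBelow (f : (n : ℕ) → ι n → M) (n : ℕ) : Submodule R M :=
  span R {x | ∃ m < n, ∃ α, x = f m α}

theorem subset_spanBelow (f : (n : ℕ) → ι n → M) {m n : ℕ} (h : m < n) (α : ι m) :
    f m α ∈ spanBelow R f n :=
  subset_span ⟨m, h, α, rfl⟩

theorem spanBelow_mono (f : (n : ℕ) → ι n → M) {m n : ℕ} (h : m ≤ n) :
    spanBelow R f m ≤ spanBelow R f n :=
  span_mono fun _ ⟨k, hk, α, hx⟩ => ⟨k, hk.trans_le h, α, hx⟩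

theorem spanBelow_zero (f : (n : ℕ) → ι n → M) : spanBelow R f 0 = ⊥ := by
  simp [spanBelow]

theorem spanBelow_succ (f : (n : ℕ) → ι n → M) (n : ℕ) :
    spanBelow R f (n + 1) = span R {x | ∃ m ≤ n, ∃ α, x = f m α} := by
  simp only [spanBelow, Nat.lt_succ_iff]

theorem spanBelow_succ_le (f : (n : ℕ) → ι n → M) (n : ℕ) :
    spanBelow R f (n + 1) ≤ span R (Set.range (f n) ∪ {x | ∃ m < n, ∃ α, x = f m α}) := by
  refine span_mono ?_
  rintro _ ⟨m, hm, α, rfl⟩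
  rcases (Nat.lt_succ_iff.1 hm).lt_or_eq with hm | rfl
  · exact Or.inr ⟨m, hm, α, rfl⟩
  · exact Or.inl ⟨α, rfl⟩

theorem spanBelow_eq_span_image (f : (n : ℕ) → ι n → M) (n : ℕ) :
    spanBelow R f n = span R ((fun σ : Σ m, ι m => f σ.1 σ.2) '' {σ | σ.1 < n}) := by
  refine congrArg (span R) (Set.ext fun x => ⟨?_, ?_⟩)
  · rintro ⟨m, hm, α, rfl⟩
    exact ⟨⟨m, α⟩, hm, rfl⟩
  · rintro ⟨⟨m, α⟩, hm, rfl⟩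
    exact ⟨m, hm, α, rfl⟩

end GradedFamily

section Triangular

variable {R M : Type*} [Ring R] [AddCommGroup M] [Module R M] {ι : ℕ → Type*}
  {f g : (n : ℕ) → ι n → M}

theorem spanBelow_le_of_sub_mem (hfg : ∀ n α, g n α - f n α ∈ spanBelow R f n) (n : ℕ) :
    spanBelow R f n ≤ spanBelow R g n := by
  induction n with
  | zero => simp [spanBelow_zero]
  | succ n ih =>
    refine span_le.2 ?_
    rintro _ ⟨m, hm, α, rfl⟩
    have hlow : g m α - f m α ∈ spanBelow R g (n + 1) :=
      spanBelow_mono g n.le_succ (ih (spanBelow_mono f (Nat.lt_succ_iff.1 hm) (hfg m α)))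
    simpa using sub_mem (subset_spanBelow g hm α) hlow

theorem linearIndependent_of_sub_mem_spanBelow
    (hf : LinearIndependent R fun σ : Σ n, ι n => f σ.1 σ.2)
    (hfg : ∀ n α, g n α - f n α ∈ spanBelow R f n) :
    LinearIndependent R fun σ : Σ n, ι n => g σ.1 σ.2 := by
  set F := fun σ : Σ n, ι n => f σ.1 σ.2
  set G := fun σ : Σ n, ι n => g σ.1 σ.2
  suffices h : ∀ n (l : (Σ n, ι n) →₀ R), (∀ σ ∈ l.support, σ.1 < n) →
      Finsupp.linearCombination R G l = 0 → l = 0 from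
    linearIndependent_iff.2 fun l =>
      h _ l fun σ hσ => Nat.lt_succ_of_le (le_sup (f := Sigma.fst) hσ)
  intro n
  induction n with
  | zero =>
    intro l hl _
    ext σ
    by_contra h
    exact Nat.not_lt_zero _ (hl σ (Finsupp.mem_support_iff.2 h))
  | succ n ih =>
    intro l hl hG
    -- As `Σ l σ • G σ = 0`, `Σ l σ • F σ` lies below degree `n`; independence of `F` then
    -- forces `l` to be supported below `n`.
    have hF : Finsupp.linearCombination R F l ∈ span R (F '' {σ | σ.1 < n}) := by
      have hdiff : Finsupp.linearCombination R F l =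
          -(Finsupp.linearCombination R G l - Finsupp.linearCombination R F l) := by
        rw [hG, zero_sub, neg_neg]
      rw [← spanBelow_eq_span_image, hdiff, Finsupp.linearCombination_apply,
        Finsupp.linearCombination_apply, Finsupp.sum, Finsupp.sum, ← sum_sub_distrib]
      refine neg_mem (sum_mem fun σ hσ => ?_)
      rw [← smul_sub]
      exact smul_mem _ _ (spanBelow_mono f (Nat.lt_succ_iff.1 (hl σ hσ)) (hfg σ.1 σ.2))
    obtain ⟨l', hl', heq⟩ := (Finsupp.mem_span_image_iff_linearCombination R).1 hF
    obtain rfl : l' = l := hf heq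
    exact ih l' (fun σ hσ => hl' hσ) hG

end Triangular

theorem apply_mul_eq_zero_of_mem_span {R A M : Type*} [CommSemiring R] [Semiring A] [Algebra R A]
    [AddCommMonoid M] [Module R M] (w : A →ₗ[R] M) {S : Set A} {r p : A}
    (hS : ∀ s ∈ S, w (s * r) = 0) (hp : p ∈ span R S) : w (p * r) = 0 :=
  span_le (p := LinearMap.ker (w ∘ₗ LinearMap.mulRight R r)).2 hS hp

theorem isUnit_det_of_mem_span {K A ι : Type*} [Field K] [Ring A] [Algebra K A] [Fintype ι]
    [DecidableEq ι] (w : A →ₗ[K] K) (a b f : ι → A) (L : Set A)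
    (hL : ∀ l ∈ L, ∀ β, w (l * f β) = 0) (hb : ∀ α, b α ∈ span K (Set.range a ∪ L))
    (hdet : IsUnit (Matrix.of fun α β => w (b α * f β)).det) :
    IsUnit (Matrix.of fun α β => w (a α * f β)).det := by
  rw [isUnit_iff_ne_zero] at hdet ⊢
  intro h0
  obtain ⟨c, hc, hac⟩ := Matrix.exists_mulVec_eq_zero_iff.2 h0
  refine hdet (Matrix.exists_mulVec_eq_zero_iff.1 ⟨c, hc, ?_⟩)
  have hmul : ∀ s, w (s * ∑ β, c β • f β) = ∑ β, w (s * f β) * c β := fun s => by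
    simp only [mul_sum, mul_smul_comm, map_sum, map_smul, smul_eq_mul, mul_comm]
  have hq : ∀ s ∈ Set.range a ∪ L, w (s * ∑ β, c β • f β) = 0 := by
    rintro _ (⟨α, rfl⟩ | hl)
    · rw [hmul]
      exact congrFun hac α
    · simp [hmul, hL _ hl]
  funext α
  simpa [Matrix.mulVec, dotProduct, hmul] using apply_mul_eq_zero_of_mem_span w hq (hb α)

section Polynomials

variable {d : ℕ}

theorem totalDegree_monIdx {n : ℕ} (α : Idx d n) : (monIdx α).totalDegree = n := by
  rw [monIdx, totalDegree_monomial _ one_ne_zero, Finsupp.sum_fintype _ _ fun _ => rfl]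
  simpa using Finset.Nat.mem_antidiagonalTuple.1 α.2

theorem mem_spanBelow_monIdx {p : MvPolynomial (Fin d) ℝ} {n : ℕ} (hp : p.totalDegree < n) :
    p ∈ spanBelow ℝ (fun m => @monIdx d m) n := by
  rw [p.as_sum]
  refine sum_mem fun ν hν => ?_
  have hν' : ⇑ν ∈ Finset.Nat.antidiagonalTuple d (ν.sum fun _ e => e) := by
    rw [Finset.Nat.mem_antidiagonalTuple, Finsupp.sum_fintype _ _ fun _ => rfl]
  rw [← mul_one (coeff ν p), ← smul_eq_mul, ← smul_monomial]
  exact smul_mem _ _ (subset_span ⟨_, (le_totalDegree hν).trans_lt hp, ⟨ν, hν'⟩, by simp [monIdx]⟩)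

namespace PolySystem

variable (P : PolySystem d)

theorem mem_spanBelow_of_totalDegree_lt {p : MvPolynomial (Fin d) ℝ} {n : ℕ}
    (hp : p.totalDegree < n) : p ∈ spanBelow ℝ P.vec n := by
  obtain ⟨k, rfl⟩ : ∃ k, n = k + 1 := ⟨n - 1, by omega⟩
  rw [spanBelow_succ]
  exact P.spans k p (by omega)

theorem totalDegree_add_of_mem_spanBelow {n : ℕ} (α : Idx d n) {r : MvPolynomial (Fin d) ℝ}
    (hr : r ∈ spanBelow ℝ P.vec n) : (P.vec n α + r).totalDegree = n := by
  cases n with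
  | zero =>
    rw [spanBelow_zero, mem_bot] at hr
    rw [hr, add_zero, P.degree_eq]
  | succ n =>
    have hle : spanBelow ℝ P.vec (n + 1) ≤ restrictTotalDegree (Fin d) ℝ n :=
      span_le.2 fun _ ⟨m, hm, β, hx⟩ => by
        rw [hx, SetLike.mem_coe, mem_restrictTotalDegree, P.degree_eq]
        omega
    have hr' : r.totalDegree < (P.vec (n + 1) α).totalDegree := by
      rw [P.degree_eq]
      exact Nat.lt_succ_of_le ((mem_restrictTotalDegree _ _ _).1 (hle hr))
    rw [totalDegree_add_eq_left_of_totalDegree_lt hr', P.degree_eq]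

def ofSubMemSpanBelow (Q : (n : ℕ) → Idx d n → MvPolynomial (Fin d) ℝ)
    (hQ : ∀ n α, Q n α - P.vec n α ∈ spanBelow ℝ P.vec n) : PolySystem d where
  vec := Q
  degree_eq n α := by simpa using P.totalDegree_add_of_mem_spanBelow α (hQ n α)
  indep := linearIndependent_of_sub_mem_spanBelow P.indep hQ
  spans n p hp := by
    rw [← spanBelow_succ]
    exact spanBelow_le_of_sub_mem hQ (n + 1) ((spanBelow_succ P.vec n).ge (P.spans n p hp))

end PolySystem

end Polynomials

section Kernel

variable {d : ℕ} {u : MvPolynomial (Fin d) ℝ →ₗ[ℝ] ℝ} {P : PolySystem d}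

theorem Hmat_transpose (u : MvPolynomial (Fin d) ℝ →ₗ[ℝ] ℝ) (P : PolySystem d) (n : ℕ) :
    (Hmat u P n)ᵀ = Hmat u P n := by
  ext α β
  simp only [Hmat, Matrix.transpose_apply, Matrix.of_apply, mul_comm]

namespace IsOPS

variable (hP : IsOPS u P)
include hP

theorem apply_mul_vec_eq_zero {p : MvPolynomial (Fin d) ℝ} {n : ℕ} (hp : p.totalDegree < n)
    (β : Idx d n) : u (p * P.vec n β) = 0 :=
  apply_mul_eq_zero_of_mem_span u (by rintro _ ⟨m, hm, α, rfl⟩; exact hP.1 m n hm α β)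
    (mem_spanBelow_monIdx hp)

theorem apply_mul_vec_eq_zero_of_mem_spanBelow {s : MvPolynomial (Fin d) ℝ} {n : ℕ}
    (hs : s ∈ spanBelow ℝ P.vec n) (β : Idx d n) : u (s * P.vec n β) = 0 :=
  apply_mul_eq_zero_of_mem_span u (by
    rintro _ ⟨m, hm, α, rfl⟩
    exact hP.apply_mul_vec_eq_zero ((P.degree_eq m α).trans_lt hm) β) hs

theorem apply_vec_mul_vec_of_ne {m k : ℕ} (h : m ≠ k) (α : Idx d m) (β : Idx d k) :
    u (P.vec m α * P.vec k β) = 0 := by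
  rcases h.lt_or_gt with h | h
  · exact hP.apply_mul_vec_eq_zero ((P.degree_eq m α).trans_lt h) β
  · rw [mul_comm]
    exact hP.apply_mul_vec_eq_zero ((P.degree_eq k β).trans_lt h) α

theorem isUnit_det_Hmat (n : ℕ) : IsUnit (Hmat u P n).det := by
  refine isUnit_det_of_mem_span u (P.vec n) monIdx (P.vec n) {x | ∃ m < n, ∃ α, x = P.vec m α}
    (by rintro _ ⟨m, hm, α, rfl⟩ β; exact hP.apply_vec_mul_vec_of_ne hm.ne α β)
    (fun α => spanBelow_succ_le P.vec n ?_) (hP.2 n)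
  exact P.mem_spanBelow_of_totalDegree_lt ((totalDegree_monIdx α).trans_lt n.lt_succ_self)

end IsOPS

noncomputable def kerPPoly (u : MvPolynomial (Fin d) ℝ →ₗ[ℝ] ℝ) (P : PolySystem d) (m : ℕ)
    (x : Fin d → ℝ) : MvPolynomial (Fin d) ℝ :=
  ∑ β, ((fun α => eval x (P.vec m α)) ᵥ* (Hmat u P m)⁻¹) β • P.vec m β

noncomputable def kerLTPoly (u : MvPolynomial (Fin d) ℝ →ₗ[ℝ] ℝ) (P : PolySystem d) (n : ℕ)
    (x : Fin d → ℝ) : MvPolynomial (Fin d) ℝ :=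
  ∑ m ∈ range n, kerPPoly u P m x

theorem eval_kerLTPoly (n : ℕ) (x y : Fin d → ℝ) :
    eval y (kerLTPoly u P n x) = kerLT u P n x y := by
  simp only [kerLTPoly, kerPPoly, kerLT, kerP, map_sum, smul_eval, Matrix.vecMul, dotProduct,
    sum_mul]
  exact sum_congr rfl fun m _ => sum_comm

@[simp]
theorem kerLTPoly_zero (x : Fin d → ℝ) : kerLTPoly u P 0 x = 0 := by
  simp [kerLTPoly]

theorem kerLTPoly_mem_spanBelow (n : ℕ) (x : Fin d → ℝ) :
    kerLTPoly u P n x ∈ spanBelow ℝ P.vec n :=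
  sum_mem fun _ hm => sum_mem fun β _ =>
    smul_mem _ _ (subset_spanBelow P.vec (mem_range.1 hm) β)

theorem IsOPS.apply_vec_mul_kerPPoly (hP : IsOPS u P) {m : ℕ} (γ : Idx d m) (x : Fin d → ℝ) :
    u (P.vec m γ * kerPPoly u P m x) = eval x (P.vec m γ) := by
  set c := (fun α => eval x (P.vec m α)) ᵥ* (Hmat u P m)⁻¹
  have h : u (P.vec m γ * kerPPoly u P m x) = (c ᵥ* (Hmat u P m)ᵀ) γ := by
    simp only [kerPPoly, mul_sum, mul_smul_comm, map_sum, map_smul, smul_eq_mul,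
      Matrix.vecMul_transpose, Matrix.mulVec, dotProduct, mul_comm]
    rfl
  rw [h, Hmat_transpose, Matrix.vecMul_vecMul, Matrix.nonsing_inv_mul _ (hP.isUnit_det_Hmat m),
    Matrix.vecMul_one]

theorem IsOPS.apply_mul_kerLTPoly (hP : IsOPS u P) {s : MvPolynomial (Fin d) ℝ} {n : ℕ}
    (hs : s ∈ spanBelow ℝ P.vec n) (x : Fin d → ℝ) : u (s * kerLTPoly u P n x) = eval x s := by
  refine LinearMap.eqOn_span (f := u ∘ₗ LinearMap.mulRight ℝ (kerLTPoly u P n x))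
    (g := (aeval x).toLinearMap) ?_ hs
  rintro _ ⟨m, hm, γ, rfl⟩
  simp only [LinearMap.comp_apply, LinearMap.mulRight_apply, AlgHom.toLinearMap_apply,
    kerLTPoly, mul_sum, map_sum]
  rw [sum_eq_single m, hP.apply_vec_mul_kerPPoly]
  · rfl
  · intro k _ hk
    simp only [kerPPoly, mul_sum, mul_smul_comm, map_sum, map_smul,
      hP.apply_vec_mul_vec_of_ne hk.symm, smul_zero, sum_const_zero]
  · exact fun h => absurd (mem_range.2 hm) h

end Kernel

section Uvarov

variable {d N : ℕ} {u v : MvPolynomial (Fin d) ℝ →ₗ[ℝ] ℝ} {P : PolySystem d}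
  {ξ : Fin N → Fin d → ℝ} {lam : Fin N → ℝ}

noncomputable def uvarovCoeff (u : MvPolynomial (Fin d) ℝ →ₗ[ℝ] ℝ) (P : PolySystem d)
    (ξ : Fin N → Fin d → ℝ) (lam : Fin N → ℝ) (n : ℕ) : Matrix (Idx d n) (Fin N) ℝ :=
  Pmat P ξ n * (1 + Matrix.diagonal lam * Kmat u P ξ n)⁻¹ * Matrix.diagonal lam

noncomputable def uvarovVec (u : MvPolynomial (Fin d) ℝ →ₗ[ℝ] ℝ) (P : PolySystem d)
    (ξ : Fin N → Fin d → ℝ) (lam : Fin N → ℝ) (n : ℕ) (β : Idx d n) : MvPolynomial (Fin d) ℝ :=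
  P.vec n β - ∑ i, uvarovCoeff u P ξ lam n β i • kerLTPoly u P n (ξ i)

theorem uvarovVec_zero : uvarovVec u P ξ lam 0 = P.vec 0 := by
  funext β
  simp [uvarovVec]

theorem eval_uvarovVec (n : ℕ) (β : Idx d n) (x : Fin d → ℝ) :
    eval x (uvarovVec u P ξ lam n β) =
      eval x (P.vec n β) - ∑ i, uvarovCoeff u P ξ lam n β i * Kvec u P ξ n x i := by
  simp only [uvarovVec, map_sub, map_sum, smul_eval, eval_kerLTPoly, Kvec]

theorem uvarovVec_sub_mem_spanBelow (n : ℕ) (β : Idx d n) :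
    uvarovVec u P ξ lam n β - P.vec n β ∈ spanBelow ℝ P.vec n := by
  rw [uvarovVec, sub_sub_cancel_left]
  exact neg_mem (sum_mem fun i _ => smul_mem _ _ (kerLTPoly_mem_spanBelow n (ξ i)))

noncomputable def uvarovSystem (u : MvPolynomial (Fin d) ℝ →ₗ[ℝ] ℝ) (P : PolySystem d)
    (ξ : Fin N → Fin d → ℝ) (lam : Fin N → ℝ) : PolySystem d :=
  P.ofSubMemSpanBelow (uvarovVec u P ξ lam) uvarovVec_sub_mem_spanBelow

theorem isUnit_det_one_add_diagonal_mul_Kmat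
    (hinv : ∀ n : ℕ, 1 ≤ n → IsUnit (1 + Matrix.diagonal lam * Kmat u P ξ n).det) (n : ℕ) :
    IsUnit (1 + Matrix.diagonal lam * Kmat u P ξ n).det := by
  rcases n.eq_zero_or_pos with rfl | hn
  · have hK : Kmat u P ξ 0 = 0 := by
      ext i j
      simp [Kmat, kerLT]
    simp [hK]
  · exact hinv n hn

section FixedDegree

variable {n : ℕ} (hB : IsUnit (1 + Matrix.diagonal lam * Kmat u P ξ n).det)
include hB

theorem Pmat_sub_mul_Kmat_mul_diagonal :
    (Pmat P ξ n - uvarovCoeff u P ξ lam n * Kmat u P ξ n) * Matrix.diagonal lam =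
      uvarovCoeff u P ξ lam n := by
  have hcomb : uvarovCoeff u P ξ lam n * Kmat u P ξ n * Matrix.diagonal lam +
      uvarovCoeff u P ξ lam n = Pmat P ξ n * Matrix.diagonal lam :=
    calc _ = Pmat P ξ n * (1 + Matrix.diagonal lam * Kmat u P ξ n)⁻¹ *
          ((1 + Matrix.diagonal lam * Kmat u P ξ n) * Matrix.diagonal lam) := by
          simp only [uvarovCoeff, Matrix.add_mul, Matrix.mul_add, Matrix.one_mul,
            Matrix.mul_assoc, add_comm]
      _ = Pmat P ξ n * Matrix.diagonal lam := by
          rw [← Matrix.mul_assoc, Matrix.mul_assoc (Pmat P ξ n), Matrix.nonsing_inv_mul _ hB,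
            Matrix.mul_one]
  rw [Matrix.sub_mul, ← hcomb, add_sub_cancel_left]

theorem mul_eval_uvarovVec_node (β : Idx d n) (j : Fin N) :
    lam j * eval (ξ j) (uvarovVec u P ξ lam n β) = uvarovCoeff u P ξ lam n β j := by
  rw [← Pmat_sub_mul_Kmat_mul_diagonal hB, Matrix.mul_diagonal, eval_uvarovVec, mul_comm]
  rfl

variable (hv : ∀ p, v p = u p + ∑ i, lam i * eval (ξ i) p) (hP : IsOPS u P)
include hv hP

theorem apply_mul_uvarovVec_eq_zero {s : MvPolynomial (Fin d) ℝ} (hs : s ∈ spanBelow ℝ P.vec n)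
    (β : Idx d n) : v (s * uvarovVec u P ξ lam n β) = 0 := by
  have hu : u (s * uvarovVec u P ξ lam n β) = -∑ i, uvarovCoeff u P ξ lam n β i * eval (ξ i) s := by
    simp only [uvarovVec, mul_sub, mul_sum, mul_smul_comm, map_sub, map_sum, map_smul,
      smul_eq_mul, hP.apply_mul_vec_eq_zero_of_mem_spanBelow hs, hP.apply_mul_kerLTPoly hs,
      zero_sub]
  have hnode : ∀ j, lam j * eval (ξ j) (s * uvarovVec u P ξ lam n β) =
      uvarovCoeff u P ξ lam n β j * eval (ξ j) s := fun j => by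
    rw [← mul_eval_uvarovVec_node hB, eval_mul]
    ring
  simp only [hv, hu, hnode, neg_add_cancel]

theorem apply_uvarovVec_mul_uvarovVec (α β : Idx d n) :
    v (uvarovVec u P ξ lam n α * uvarovVec u P ξ lam n β) =
      (Hmat u P n + uvarovCoeff u P ξ lam n * (Pmat P ξ n)ᵀ) α β := by
  have hQP : v (uvarovVec u P ξ lam n α * uvarovVec u P ξ lam n β) =
      v (uvarovVec u P ξ lam n α * P.vec n β) := by
    have hβ : uvarovVec u P ξ lam n β =
        P.vec n β - ∑ i, uvarovCoeff u P ξ lam n β i • kerLTPoly u P n (ξ i) := rfl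
    rw [hβ]
    simp only [mul_sub, mul_sum, mul_smul_comm, map_sub, map_sum, map_smul, smul_eq_mul]
    simp only [mul_comm (uvarovVec u P ξ lam n α),
      apply_mul_uvarovVec_eq_zero hB hv hP (kerLTPoly_mem_spanBelow n _), mul_zero,
      sum_const_zero, sub_zero]
  have hu : u (uvarovVec u P ξ lam n α * P.vec n β) = Hmat u P n α β := by
    simp only [uvarovVec, sub_mul, sum_mul, smul_mul_assoc, map_sub, map_sum, map_smul,
      smul_eq_mul, hP.apply_mul_vec_eq_zero_of_mem_spanBelow (kerLTPoly_mem_spanBelow n _),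
      mul_zero, sum_const_zero, sub_zero]
    rfl
  rw [hQP, hv, hu, Matrix.add_apply, Matrix.mul_apply]
  congr 1
  refine sum_congr rfl fun j _ => ?_
  rw [eval_mul, ← mul_assoc, mul_eval_uvarovVec_node hB]
  rfl

end FixedDegree

theorem isOPS_uvarovSystem (hv : ∀ p, v p = u p + ∑ i, lam i * eval (ξ i) p) (hP : IsOPS u P)
    (hB : ∀ n, IsUnit (1 + Matrix.diagonal lam * Kmat u P ξ n).det)
    (hHhat : ∀ n : ℕ, IsUnit (Hmat u P n +
      Pmat P ξ n * (1 + Matrix.diagonal lam * Kmat u P ξ n)⁻¹ *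
        Matrix.diagonal lam * (Pmat P ξ n)ᵀ).det) :
    IsOPS v (uvarovSystem u P ξ lam) := by
  have horth : ∀ m n, m < n → ∀ (α : Idx d m) (β : Idx d n),
      v (monIdx α * uvarovVec u P ξ lam n β) = 0 := fun m n hmn α β =>
    apply_mul_uvarovVec_eq_zero (hB n) hv hP
      (P.mem_spanBelow_of_totalDegree_lt ((totalDegree_monIdx α).trans_lt hmn)) β
  refine ⟨horth, fun n => ?_⟩
  have hdeg := (uvarovSystem u P ξ lam).degree_eq n
  refine isUnit_det_of_mem_span v monIdx (uvarovVec u P ξ lam n) (uvarovVec u P ξ lam n)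
    {x | ∃ m < n, ∃ α : Idx d m, x = monIdx α}
    (by rintro _ ⟨m, hm, α, rfl⟩ β; exact horth m n hm α β) (fun α => ?_) ?_
  · exact spanBelow_succ_le (fun m => @monIdx d m) n
      (mem_spanBelow_monIdx ((hdeg α).trans_lt n.lt_succ_self))
  · have hGram : (Matrix.of fun α β => v (uvarovVec u P ξ lam n α * uvarovVec u P ξ lam n β)) =
        Hmat u P n + uvarovCoeff u P ξ lam n * (Pmat P ξ n)ᵀ := by
      ext α β
      exact apply_uvarovVec_mul_uvarovVec (hB n) hv hP α β
    rw [hGram]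
    exact hHhat n

end Uvarov

theorem uvarov_sufficiency_general
    {d N : ℕ}
    (u v : MvPolynomial (Fin d) ℝ →ₗ[ℝ] ℝ)
    (ξ : Fin N → (Fin d → ℝ))
    (lam : Fin N → ℝ)
    (hv : ∀ p : MvPolynomial (Fin d) ℝ, v p = u p + ∑ i, lam i * eval (ξ i) p)
    (P : PolySystem d) (hP : IsOPS u P)
    (hinv : ∀ n : ℕ, 1 ≤ n → IsUnit (1 + Matrix.diagonal lam * Kmat u P ξ n).det)
    (hHhat : ∀ n : ℕ, IsUnit (Hmat u P n +
      Pmat P ξ n * (1 + Matrix.diagonal lam * Kmat u P ξ n)⁻¹ *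
        Matrix.diagonal lam * (Pmat P ξ n)ᵀ).det) :
    ∃ Q : PolySystem d,
      Q.vec 0 = P.vec 0 ∧
      (∀ n : ℕ, 1 ≤ n → ∀ (β : Idx d n) (x : Fin d → ℝ),
        eval x (Q.vec n β) = eval x (P.vec n β) -
          ∑ i, (Pmat P ξ n * (1 + Matrix.diagonal lam * Kmat u P ξ n)⁻¹ *
              Matrix.diagonal lam) β i * Kvec u P ξ n x i) ∧
      IsOPS v Q ∧ QuasiDefinite v := by
  have hQ : IsOPS v (uvarovSystem u P ξ lam) :=
    isOPS_uvarovSystem hv hP (isUnit_det_one_add_diagonal_mul_Kmat hinv) hHhat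
  exact ⟨uvarovSystem u P ξ lam, uvarovVec_zero, fun n _ β x => eval_uvarovVec n β x, hQ,
    _, hQ⟩

/-- Theorem 3.1, sufficiency. If for every `n ≥ 1` the matrix
`I_N + Λ𝒦_{n-1}` is invertible and for every `n ≥ 0` the matrix
`Ĥ_n = H_n + 𝖯_n(ξ)(I_N + Λ𝒦_{n-1})⁻¹ Λ 𝖯_n(ξ)^t` is invertible, then the polynomial
vectors `ℚ_0 = ℙ_0`, `ℚ_n(x) = ℙ_n(x) - 𝖯_n(ξ)(I_N + Λ𝒦_{n-1})⁻¹ Λ 𝖪_{n-1}(ξ,x)` form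
an OPS with respect to the Uvarov modification `v`; in particular `v` is quasi-definite. -/
theorem uvarov_sufficiency
    {d N : ℕ} (hd : 1 ≤ d) (hN : 1 ≤ N)
    (u v : MvPolynomial (Fin d) ℝ →ₗ[ℝ] ℝ)
    (ξ : Fin N → (Fin d → ℝ)) (hξ : Function.Injective ξ)
    (lam : Fin N → ℝ) (hlam : ∀ i, lam i ≠ 0)
    (hv : ∀ p : MvPolynomial (Fin d) ℝ, v p = u p + ∑ i, lam i * eval (ξ i) p)
    (P : PolySystem d) (hP : IsOPS u P)
    (hinv : ∀ n : ℕ, 1 ≤ n → IsUnit (1 + Matrix.diagonal lam * Kmat u P ξ n).det)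
    (hHhat : ∀ n : ℕ, IsUnit (Hmat u P n +
      Pmat P ξ n * (1 + Matrix.diagonal lam * Kmat u P ξ n)⁻¹ *
        Matrix.diagonal lam * (Pmat P ξ n)ᵀ).det) :
    ∃ Q : PolySystem d,
      Q.vec 0 = P.vec 0 ∧
      (∀ n : ℕ, 1 ≤ n → ∀ (β : Idx d n) (x : Fin d → ℝ),
        eval x (Q.vec n β) = eval x (P.vec n β) -
          ∑ i, (Pmat P ξ n * (1 + Matrix.diagonal lam * Kmat u P ξ n)⁻¹ *
              Matrix.diagonal lam) β i * Kvec u P ξ n x i) ∧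
      IsOPS v Q ∧ QuasiDefinite v :=
  uvarov_sufficiency_general u v ξ lam hv P hP hinv hHhat
end

section
/- Let u be a quasi-definite moment functional on Π^d with OPS {ℙ_n}, and let its Uvarov modification v (at N distinct points ξ_1,…,ξ_N with nonzero masses λ_1,…,λ_N) be quasi-definite, with {ℚ_n} the OPS of v given by ℚ_n(x) = ℙ_n(x) − 𝖯_n(ξ)(I_N + Λ𝒦_{n−1})^{−1} Λ 𝖪_{n−1}(ξ,x) and Ĥ_n = ⟨v, ℚ_n ℚ_n^t⟩. Then for every n ≥ 0 the inverse of Ĥ_n is given by Ĥ_n^{−1} = H_n^{−1} − H_n^{−1} 𝖯_n(ξ)(I_N + Λ𝒦_n)^{−1} Λ 𝖯_n(ξ)^t H_n^{−1}. -/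
open MvPolynomial Matrix

section Aux

variable {d : ℕ}

lemma finsupp_sum_eq (ν : Fin d →₀ ℕ) : (ν.sum fun _ e => e) = ∑ i, ν i :=
  Finsupp.sum_fintype _ _ (fun _ => rfl)

lemma idx_sum {n : ℕ} (γ : Idx d n) : ∑ i, γ.1 i = n := by
  exact (Finset.Nat.mem_antidiagonalTuple).1 γ.2

lemma mem_adt {n : ℕ} (ν : Fin d →₀ ℕ) (h : ∑ i, ν i = n) :
    (ν : Fin d → ℕ) ∈ Finset.Nat.antidiagonalTuple d n := by
  simpa [Finset.Nat.mem_antidiagonalTuple] using h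

lemma ops_ortho {w : MvPolynomial (Fin d) ℝ →ₗ[ℝ] ℝ} {R : PolySystem d}
    (hw : IsOPS w R) {n : ℕ} (β : Idx d n) (p : MvPolynomial (Fin d) ℝ)
    (hp : ∀ ν ∈ p.support, (∑ i, ν i) < n) : w (p * R.vec n β) = 0 := by
  conv_lhs => rw [p.as_sum]
  rw [Finset.sum_mul, map_sum]
  refine Finset.sum_eq_zero fun ν hν => ?_
  have key : (MvPolynomial.monomial ν (MvPolynomial.coeff ν p) : MvPolynomial (Fin d) ℝ)
      = MvPolynomial.coeff ν p •
        monIdx (⟨(ν : Fin d → ℕ), mem_adt ν rfl⟩ : Idx d (∑ i, ν i)) := by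
    simp [monIdx, Finsupp.equivFunOnFinite_symm_coe, MvPolynomial.smul_monomial]
  rw [key, smul_mul_assoc, w.map_smul, hw.1 _ n (hp ν hν) _ β, smul_zero]

/-- leading-coefficient matrix of `R_n`. -/
noncomputable def Cmat (R : PolySystem d) (n : ℕ) : Matrix (Idx d n) (Idx d n) ℝ :=
  Matrix.of fun α β => MvPolynomial.coeff (Finsupp.equivFunOnFinite.symm β.1) (R.vec n α)

lemma coeff_vec_eq_zero {R : PolySystem d} {n : ℕ} (α : Idx d n) (ν : Fin d →₀ ℕ)
    (h : n < ∑ i, ν i) : MvPolynomial.coeff ν (R.vec n α) = 0 := by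
  apply MvPolynomial.coeff_eq_zero_of_totalDegree_lt
  rw [R.degree_eq n α]
  calc n < ∑ i, ν i := h
    _ = ∑ i ∈ ν.support, ν i :=
      (Finset.sum_subset (Finset.subset_univ _)
        (fun i _ hi => by simpa using (Finsupp.notMem_support_iff.1 hi))).symm

lemma coeff_monIdx {n : ℕ} (γ : Idx d n) (ν : Fin d →₀ ℕ) :
    MvPolynomial.coeff ν (monIdx γ) =
      if γ.1 = (ν : Fin d → ℕ) then 1 else 0 := by
  rw [monIdx, MvPolynomial.coeff_monomial]
  by_cases h : Finsupp.equivFunOnFinite.symm γ.1 = ν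
  · rw [if_pos h, if_pos]
    rw [← h]; rfl
  · rw [if_neg h, if_neg]
    intro hh
    exact h (by rw [hh, Finsupp.equivFunOnFinite_symm_coe])

lemma coeff_sum_mon_of_ne {n : ℕ} (c : Idx d n → ℝ) (ν : Fin d →₀ ℕ)
    (hν : (∑ i, ν i) ≠ n) :
    MvPolynomial.coeff ν (∑ γ : Idx d n, c γ • monIdx γ) = 0 := by
  rw [MvPolynomial.coeff_sum]
  refine Finset.sum_eq_zero fun γ _ => ?_
  rw [MvPolynomial.coeff_smul, coeff_monIdx]
  have : γ.1 ≠ (ν : Fin d → ℕ) := by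
    intro h
    apply hν
    rw [← idx_sum γ, h]
  simp [this]

lemma coeff_sum_mon_of_eq {n : ℕ} (c : Idx d n → ℝ) (ν : Fin d →₀ ℕ)
    (hν : (∑ i, ν i) = n) :
    MvPolynomial.coeff ν (∑ γ : Idx d n, c γ • monIdx γ)
      = c ⟨(ν : Fin d → ℕ), mem_adt ν hν⟩ := by
  rw [MvPolynomial.coeff_sum]
  rw [Finset.sum_eq_single (⟨(ν : Fin d → ℕ), mem_adt ν hν⟩ : Idx d n)]
  · rw [MvPolynomial.coeff_smul, coeff_monIdx]; simp
  · intro γ _ hne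
    rw [MvPolynomial.coeff_smul, coeff_monIdx]
    have : γ.1 ≠ (ν : Fin d → ℕ) := fun h => hne (Subtype.ext h)
    simp [this]
  · intro h; exact absurd (Finset.mem_univ _) h

end Aux
section Det

variable {d : ℕ}

lemma Hmat_eq_mul {w : MvPolynomial (Fin d) ℝ →ₗ[ℝ] ℝ} {R : PolySystem d}
    (hw : IsOPS w R) (n : ℕ) :
    Hmat w R n = Cmat R n * Matrix.of (fun α β : Idx d n => w (monIdx α * R.vec n β)) := by
  ext α β
  have hq : ∀ ν ∈ (R.vec n α - ∑ γ : Idx d n, Cmat R n α γ • monIdx γ).support,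
      (∑ i, ν i) < n := by
    intro ν hν
    rw [MvPolynomial.mem_support_iff] at hν
    by_contra hge
    push_neg at hge
    apply hν
    rw [MvPolynomial.coeff_sub]
    rcases eq_or_lt_of_le hge with h | h
    · rw [coeff_sum_mon_of_eq _ ν h.symm]
      have : Cmat R n α ⟨(ν : Fin d → ℕ), mem_adt ν h.symm⟩
          = MvPolynomial.coeff ν (R.vec n α) := by
        simp [Cmat, Finsupp.equivFunOnFinite_symm_coe]
      rw [this, sub_self]
    · rw [coeff_sum_mon_of_ne _ ν (by omega), coeff_vec_eq_zero α ν h, sub_zero]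
  have hdecomp : R.vec n α = (∑ γ : Idx d n, Cmat R n α γ • monIdx γ)
      + (R.vec n α - ∑ γ : Idx d n, Cmat R n α γ • monIdx γ) := by ring
  show w (R.vec n α * R.vec n β) = _
  conv_lhs => rw [hdecomp]
  rw [add_mul, map_add, ops_ortho hw β _ hq, add_zero, Finset.sum_mul, map_sum,
    Matrix.mul_apply]
  refine Finset.sum_congr rfl fun γ _ => ?_
  rw [smul_mul_assoc, w.map_smul, smul_eq_mul]
  rfl

lemma Cmat_det_unit (R : PolySystem d) (n : ℕ) : IsUnit (Cmat R n).det := by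
  rw [isUnit_iff_ne_zero]
  intro hdet
  have hdet' : ((Cmat R n)ᵀ).det = 0 := by rw [Matrix.det_transpose]; exact hdet
  obtain ⟨c, hc0, hc⟩ := (Matrix.exists_mulVec_eq_zero_iff).2 hdet'
  set q : MvPolynomial (Fin d) ℝ := ∑ α : Idx d n, c α • R.vec n α with hqdef
  have hqcoeff : ∀ ν : Fin d →₀ ℕ, (∑ i, ν i) = n → MvPolynomial.coeff ν q = 0 := by
    intro ν hν
    have h1 := congrFun hc ⟨(ν : Fin d → ℕ), mem_adt ν hν⟩
    rw [Matrix.mulVec] at h1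
    have h2 : MvPolynomial.coeff ν q
        = ((Cmat R n)ᵀ).mulVec c ⟨(ν : Fin d → ℕ), mem_adt ν hν⟩ := by
      rw [hqdef, MvPolynomial.coeff_sum, Matrix.mulVec]
      refine Finset.sum_congr rfl fun α _ => ?_
      rw [MvPolynomial.coeff_smul]
      show c α • MvPolynomial.coeff ν (R.vec n α) = (Cmat R n)ᵀ _ α * c α
      rw [Matrix.transpose_apply]
      simp [Cmat, Finsupp.equivFunOnFinite_symm_coe, mul_comm]
    rw [h2]
    exact congrFun hc _
  have hsupp : ∀ ν ∈ q.support, (∑ i, ν i) < n := by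
    intro ν hν
    rw [MvPolynomial.mem_support_iff] at hν
    by_contra hge
    push_neg at hge
    rcases eq_or_lt_of_le hge with h | h
    · exact hν (hqcoeff ν h.symm)
    · apply hν
      rw [hqdef, MvPolynomial.coeff_sum]
      exact Finset.sum_eq_zero fun α _ => by
        rw [MvPolynomial.coeff_smul, coeff_vec_eq_zero α ν h, smul_zero]
  have hspan : q ∈ Submodule.span ℝ
      ((fun p : (Σ m : ℕ, Idx d m) => R.vec p.1 p.2) '' {p | p.1 < n}) := by
    rcases Nat.eq_zero_or_pos n with rfl | hn
    · have : q = 0 := by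
        rw [← MvPolynomial.support_eq_empty]
        exact Finset.eq_empty_of_forall_notMem fun ν hν => by
          have := hsupp ν hν; omega
      rw [this]; exact Submodule.zero_mem _
    · have hdeg : q.totalDegree ≤ n - 1 := by
        apply Finset.sup_le
        intro ν hν
        have h1 := hsupp ν hν
        have h2 : (ν.sum fun _ e => e) = ∑ i, ν i := finsupp_sum_eq ν
        omega
      have hmem := R.spans (n - 1) q hdeg
      refine Submodule.span_le.mpr ?_ hmem
      rintro p ⟨m, hm, α, rfl⟩
      exact Submodule.subset_span ⟨⟨m, α⟩, by simp; omega, rfl⟩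
  have hspan2 : q ∈ Submodule.span ℝ
      ((fun p : (Σ m : ℕ, Idx d m) => R.vec p.1 p.2) '' {p | p.1 = n}) := by
    rw [hqdef]
    exact Submodule.sum_mem _ fun α _ =>
      Submodule.smul_mem _ _ (Submodule.subset_span ⟨⟨n, α⟩, rfl, rfl⟩)
  have hdisj := R.indep.disjoint_span_image
    (s := {p : (Σ m : ℕ, Idx d m) | p.1 < n}) (t := {p | p.1 = n})
    (by rw [Set.disjoint_left]; rintro ⟨m, α⟩ h1 h2; simp at h1 h2; omega)
  have hq0 : q = 0 := Submodule.disjoint_def.mp hdisj q hspan hspan2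
  have hli : LinearIndependent ℝ (fun α : Idx d n => R.vec n α) :=
    R.indep.comp (fun α : Idx d n => (⟨n, α⟩ : Σ m : ℕ, Idx d m))
      (fun a b h => by simpa using h)
  have := Fintype.linearIndependent_iff.mp hli c (by rw [← hqdef]; exact hq0)
  exact hc0 (funext this)

lemma Hmat_det_unit {w : MvPolynomial (Fin d) ℝ →ₗ[ℝ] ℝ} {R : PolySystem d}
    (hw : IsOPS w R) (n : ℕ) : IsUnit (Hmat w R n).det := by
  rw [Hmat_eq_mul hw n, Matrix.det_mul]
  exact (Cmat_det_unit R n).mul (hw.2 n)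

end Det
section Ker

variable {d N : ℕ}

/-- polynomial whose evaluation at `x` is `K_{n-1}(u; ξ i, x)`. -/
noncomputable def kerPolyLT (u : MvPolynomial (Fin d) ℝ →ₗ[ℝ] ℝ) (P : PolySystem d)
    (ξ : Fin N → (Fin d → ℝ)) (n : ℕ) (i : Fin N) : MvPolynomial (Fin d) ℝ :=
  ∑ m ∈ Finset.range n, ∑ α : Idx d m, ∑ β : Idx d m,
    (eval (ξ i) (P.vec m α) * (Hmat u P m)⁻¹ α β) • P.vec m β

lemma eval_kerPolyLT (u : MvPolynomial (Fin d) ℝ →ₗ[ℝ] ℝ) (P : PolySystem d)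
    (ξ : Fin N → (Fin d → ℝ)) (n : ℕ) (i : Fin N) (x : Fin d → ℝ) :
    eval x (kerPolyLT u P ξ n i) = kerLT u P n (ξ i) x := by
  rw [kerPolyLT, kerLT, map_sum]
  refine Finset.sum_congr rfl fun m _ => ?_
  rw [kerP, map_sum]
  refine Finset.sum_congr rfl fun α _ => ?_
  rw [map_sum]
  refine Finset.sum_congr rfl fun β _ => ?_
  rw [MvPolynomial.smul_eval, mul_assoc]

lemma coeff_kerPolyLT (u : MvPolynomial (Fin d) ℝ →ₗ[ℝ] ℝ) (P : PolySystem d)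
    (ξ : Fin N → (Fin d → ℝ)) (n : ℕ) (i : Fin N) :
    ∀ ν ∈ (kerPolyLT u P ξ n i).support, (∑ j, ν j) < n := by
  intro ν hν
  rw [MvPolynomial.mem_support_iff] at hν
  by_contra hge
  push_neg at hge
  apply hν
  rw [kerPolyLT, MvPolynomial.coeff_sum]
  refine Finset.sum_eq_zero fun m hm => ?_
  rw [MvPolynomial.coeff_sum]
  refine Finset.sum_eq_zero fun α _ => ?_
  rw [MvPolynomial.coeff_sum]
  refine Finset.sum_eq_zero fun β _ => ?_
  rw [MvPolynomial.coeff_smul, coeff_vec_eq_zero β ν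
    (lt_of_lt_of_le (Finset.mem_range.mp hm) hge), smul_zero]

end Ker
section Main

variable {d N : ℕ}

lemma Kmat_zero (u : MvPolynomial (Fin d) ℝ →ₗ[ℝ] ℝ) (P : PolySystem d)
    (ξ : Fin N → (Fin d → ℝ)) : Kmat u P ξ 0 = 0 := by
  ext i j; simp [Kmat, kerLT]

lemma Kmat_succ (u : MvPolynomial (Fin d) ℝ →ₗ[ℝ] ℝ) (P : PolySystem d)
    (ξ : Fin N → (Fin d → ℝ)) (n : ℕ) :
    Kmat u P ξ (n + 1) = Kmat u P ξ n + (Pmat P ξ n)ᵀ * (Hmat u P n)⁻¹ * Pmat P ξ n := by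
  ext i j
  show kerLT u P (n + 1) (ξ i) (ξ j) = kerLT u P n (ξ i) (ξ j) + _
  rw [kerLT, Finset.sum_range_succ, ← kerLT]
  congr 1
  rw [kerP]
  simp only [Matrix.mul_apply, Matrix.transpose_apply, Finset.sum_mul]
  rw [Finset.sum_comm]
  rfl

lemma Hhat_eq
    (u v : MvPolynomial (Fin d) ℝ →ₗ[ℝ] ℝ)
    (ξ : Fin N → (Fin d → ℝ)) (lam : Fin N → ℝ)
    (hv : ∀ p : MvPolynomial (Fin d) ℝ, v p = u p + ∑ i, lam i * eval (ξ i) p)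
    (P : PolySystem d) (hP : IsOPS u P)
    (Q : PolySystem d) (hQ : IsOPS v Q)
    (hconn : ∀ (n : ℕ) (β : Idx d n) (x : Fin d → ℝ),
      eval x (Q.vec n β) = eval x (P.vec n β) -
        ∑ i, (Pmat P ξ n * (1 + Matrix.diagonal lam * Kmat u P ξ n)⁻¹ *
            Matrix.diagonal lam) β i * Kvec u P ξ n x i)
    (n : ℕ) (hG : IsUnit (1 + Matrix.diagonal lam * Kmat u P ξ n).det) :
    Hmat v Q n = Hmat u P n + Pmat P ξ n *
      (1 + Matrix.diagonal lam * Kmat u P ξ n)⁻¹ * Matrix.diagonal lam * (Pmat P ξ n)ᵀ := by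
  set G : Matrix (Fin N) (Fin N) ℝ := 1 + Matrix.diagonal lam * Kmat u P ξ n with hGdef
  set c : Matrix (Idx d n) (Fin N) ℝ := Pmat P ξ n * G⁻¹ * Matrix.diagonal lam with hcdef
  have hpoly : ∀ β : Idx d n,
      Q.vec n β = P.vec n β - ∑ i, c β i • kerPolyLT u P ξ n i := by
    intro β
    apply MvPolynomial.funext; intro x
    rw [hconn n β x, map_sub, map_sum]
    congr 1
    refine Finset.sum_congr rfl fun i _ => ?_
    rw [MvPolynomial.smul_eval, eval_kerPolyLT]
    rfl
  have key : ∀ α β : Idx d n, v (Q.vec n α * Q.vec n β)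
      = Hmat u P n α β +
        ∑ i, (Pmat P ξ n - c * Kmat u P ξ n) α i * lam i * Pmat P ξ n β i := by
    intro α β
    have h1 : v (Q.vec n α * Q.vec n β) = v (Q.vec n α * P.vec n β) := by
      conv_lhs => rw [hpoly β]
      rw [mul_sub, map_sub, Finset.mul_sum, map_sum]
      rw [Finset.sum_eq_zero fun i _ => by
        rw [mul_smul_comm, v.map_smul, mul_comm,
          ops_ortho hQ α _ (coeff_kerPolyLT u P ξ n i), smul_zero], sub_zero]
    have h2 : u (Q.vec n α * P.vec n β) = Hmat u P n α β := by
      conv_lhs => rw [hpoly α]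
      rw [sub_mul, map_sub, Finset.sum_mul, map_sum]
      rw [Finset.sum_eq_zero fun i _ => by
        rw [smul_mul_assoc, u.map_smul,
          ops_ortho hP β _ (coeff_kerPolyLT u P ξ n i), smul_zero], sub_zero]
      rfl
    rw [h1, hv, h2]
    congr 1
    refine Finset.sum_congr rfl fun i _ => ?_
    have h3 : eval (ξ i) (Q.vec n α) = (Pmat P ξ n - c * Kmat u P ξ n) α i := by
      rw [hconn n α (ξ i)]
      show eval (ξ i) (P.vec n α) - _ = Pmat P ξ n α i - (c * Kmat u P ξ n) α i
      rw [Matrix.mul_apply]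
      rfl
    rw [_root_.map_mul, h3,
      show (eval (ξ i)) (P.vec n β) = Pmat P ξ n β i from rfl]
    ring
  have h4 : Pmat P ξ n = Pmat P ξ n * G⁻¹ + c * Kmat u P ξ n := by
    have hGG : G⁻¹ * G = 1 := Matrix.nonsing_inv_mul G hG
    have h5 : Pmat P ξ n * G⁻¹ * G = Pmat P ξ n := by
      rw [Matrix.mul_assoc, hGG, Matrix.mul_one]
    conv_lhs => rw [← h5]
    rw [hGdef, Matrix.mul_add, Matrix.mul_one, hcdef, Matrix.mul_assoc (Pmat P ξ n * G⁻¹)]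
  have hM : Pmat P ξ n - c * Kmat u P ξ n = Pmat P ξ n * G⁻¹ :=
    sub_eq_iff_eq_add.mpr h4
  ext α β
  show v (Q.vec n α * Q.vec n β) = _
  rw [key α β, Matrix.add_apply]
  congr 1
  rw [hM]
  show _ = ∑ i, (Pmat P ξ n * G⁻¹ * Matrix.diagonal lam) α i * (Pmat P ξ n)ᵀ i β
  refine Finset.sum_congr rfl fun i _ => ?_
  rw [Matrix.mul_diagonal, Matrix.transpose_apply]

end Main
section GUnit

variable {d N : ℕ}

lemma Gunit_all
    (u v : MvPolynomial (Fin d) ℝ →ₗ[ℝ] ℝ)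
    (ξ : Fin N → (Fin d → ℝ)) (lam : Fin N → ℝ)
    (hv : ∀ p : MvPolynomial (Fin d) ℝ, v p = u p + ∑ i, lam i * eval (ξ i) p)
    (P : PolySystem d) (hP : IsOPS u P)
    (Q : PolySystem d) (hQ : IsOPS v Q)
    (hconn : ∀ (n : ℕ) (β : Idx d n) (x : Fin d → ℝ),
      eval x (Q.vec n β) = eval x (P.vec n β) -
        ∑ i, (Pmat P ξ n * (1 + Matrix.diagonal lam * Kmat u P ξ n)⁻¹ *
            Matrix.diagonal lam) β i * Kvec u P ξ n x i) :
    ∀ n : ℕ, IsUnit (1 + Matrix.diagonal lam * Kmat u P ξ n).det := by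
  intro n
  induction n with
  | zero => rw [Kmat_zero]; simp
  | succ n ih =>
    have hH := Hmat_det_unit hP n
    have hHhat := Hmat_det_unit hQ n
    have hhat := Hhat_eq u v ξ lam hv P hP Q hQ hconn n ih
    set G : Matrix (Fin N) (Fin N) ℝ := 1 + Matrix.diagonal lam * Kmat u P ξ n with hGdef
    have hGG : G * G⁻¹ = 1 := Matrix.mul_nonsing_inv G ih
    have hHH : (Hmat u P n)⁻¹ * Hmat u P n = 1 := Matrix.nonsing_inv_mul _ hH
    have hsplit : 1 + Matrix.diagonal lam * Kmat u P ξ (n + 1)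
        = G * (1 + (G⁻¹ * Matrix.diagonal lam * (Pmat P ξ n)ᵀ) *
            ((Hmat u P n)⁻¹ * Pmat P ξ n)) := by
      have e1 : G * (1 + (G⁻¹ * Matrix.diagonal lam * (Pmat P ξ n)ᵀ) *
            ((Hmat u P n)⁻¹ * Pmat P ξ n))
          = G + Matrix.diagonal lam * ((Pmat P ξ n)ᵀ *
              ((Hmat u P n)⁻¹ * Pmat P ξ n)) := by
        rw [Matrix.mul_add, Matrix.mul_one,
          show G * ((G⁻¹ * Matrix.diagonal lam * (Pmat P ξ n)ᵀ) *
              ((Hmat u P n)⁻¹ * Pmat P ξ n))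
            = (G * G⁻¹) * (Matrix.diagonal lam * ((Pmat P ξ n)ᵀ *
                ((Hmat u P n)⁻¹ * Pmat P ξ n))) from by
              simp only [Matrix.mul_assoc], hGG, Matrix.one_mul]
      rw [e1, Kmat_succ, Matrix.mul_add, hGdef]
      simp only [Matrix.mul_assoc, add_assoc]
    rw [hsplit, Matrix.det_mul]
    refine ih.mul ?_
    rw [Matrix.det_one_add_mul_comm]
    have hBA : 1 + (Hmat u P n)⁻¹ * Pmat P ξ n *
          (G⁻¹ * Matrix.diagonal lam * (Pmat P ξ n)ᵀ)
        = (Hmat u P n)⁻¹ * Hmat v Q n := by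
      rw [hhat, Matrix.mul_add, hHH]
      simp only [Matrix.mul_assoc]
    rw [hBA, Matrix.det_mul]
    exact (Matrix.isUnit_nonsing_inv_det _ hH).mul hHhat

end GUnit
/-- Proposition 3.2. In the conditions of Theorem 3.1, with `{ℚ_n}`
the OPS of the Uvarov modification `v` given by the connection formula and
`Ĥ_n = ⟨v, ℚ_n ℚ_n^t⟩`, one has
`Ĥ_n⁻¹ = H_n⁻¹ - H_n⁻¹ 𝖯_n(ξ)(I_N + Λ𝒦_n)⁻¹ Λ 𝖯_n(ξ)^t H_n⁻¹` for all `n ≥ 0`. -/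
theorem uvarov_inverse_Hhat
    {d N : ℕ} (hd : 1 ≤ d) (hN : 1 ≤ N)
    (u v : MvPolynomial (Fin d) ℝ →ₗ[ℝ] ℝ)
    (ξ : Fin N → (Fin d → ℝ)) (hξ : Function.Injective ξ)
    (lam : Fin N → ℝ) (hlam : ∀ i, lam i ≠ 0)
    (hv : ∀ p : MvPolynomial (Fin d) ℝ, v p = u p + ∑ i, lam i * eval (ξ i) p)
    (P : PolySystem d) (hP : IsOPS u P)
    (Q : PolySystem d) (hQ : IsOPS v Q)
    (hconn : ∀ (n : ℕ) (β : Idx d n) (x : Fin d → ℝ),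
      eval x (Q.vec n β) = eval x (P.vec n β) -
        ∑ i, (Pmat P ξ n * (1 + Matrix.diagonal lam * Kmat u P ξ n)⁻¹ *
            Matrix.diagonal lam) β i * Kvec u P ξ n x i) :
    ∀ n : ℕ,
      (Hmat v Q n)⁻¹ = (Hmat u P n)⁻¹ -
        (Hmat u P n)⁻¹ * Pmat P ξ n *
          (1 + Matrix.diagonal lam * Kmat u P ξ (n + 1))⁻¹ *
            Matrix.diagonal lam * (Pmat P ξ n)ᵀ * (Hmat u P n)⁻¹ := by
  intro n
  have hGn := Gunit_all u v ξ lam hv P hP Q hQ hconn n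
  have hGn1 := Gunit_all u v ξ lam hv P hP Q hQ hconn (n + 1)
  have hH := Hmat_det_unit hP n
  have hhat := Hhat_eq u v ξ lam hv P hP Q hQ hconn n hGn
  set Λ : Matrix (Fin N) (Fin N) ℝ := Matrix.diagonal lam with hΛdef
  have hΛ : IsUnit Λ.det := by
    rw [hΛdef, Matrix.det_diagonal]
    exact isUnit_iff_ne_zero.2 (Finset.prod_ne_zero_iff.2 fun i _ => hlam i)
  set G : Matrix (Fin N) (Fin N) ℝ := 1 + Λ * Kmat u P ξ n with hGdef
  set C : Matrix (Fin N) (Fin N) ℝ := G⁻¹ * Λ with hCdef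
  have hC : IsUnit C.det := by
    rw [hCdef, Matrix.det_mul]
    exact (Matrix.isUnit_nonsing_inv_det G hGn).mul hΛ
  have hΛΛ : Λ⁻¹ * Λ = 1 := Matrix.nonsing_inv_mul Λ hΛ
  have hCinv : C⁻¹ = Λ⁻¹ * G := by
    rw [hCdef, Matrix.mul_inv_rev, Matrix.nonsing_inv_nonsing_inv G hGn]
  have hmid : C⁻¹ + (Pmat P ξ n)ᵀ * (Hmat u P n)⁻¹ * Pmat P ξ n
      = Λ⁻¹ * (1 + Λ * Kmat u P ξ (n + 1)) := by
    rw [hCinv, hGdef, Kmat_succ]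
    simp only [Matrix.mul_add, ← Matrix.mul_assoc, hΛΛ, Matrix.one_mul,
      Matrix.mul_one, add_assoc]
  have hmidU : IsUnit (C⁻¹ + (Pmat P ξ n)ᵀ * (Hmat u P n)⁻¹ * Pmat P ξ n).det := by
    rw [hmid, Matrix.det_mul]
    exact (Matrix.isUnit_nonsing_inv_det Λ hΛ).mul hGn1
  have hwood := Matrix.add_mul_mul_inv_eq_sub (Hmat u P n) (Pmat P ξ n) C ((Pmat P ξ n)ᵀ)
    ((Matrix.isUnit_iff_isUnit_det _).2 hH) ((Matrix.isUnit_iff_isUnit_det _).2 hC)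
    ((Matrix.isUnit_iff_isUnit_det _).2 hmidU)
  have hform : Hmat v Q n = Hmat u P n + Pmat P ξ n * C * (Pmat P ξ n)ᵀ := by
    rw [hhat, hCdef, Matrix.mul_assoc (Pmat P ξ n) G⁻¹ Λ]
  rw [hform, hwood, hmid, Matrix.mul_inv_rev, Matrix.nonsing_inv_nonsing_inv Λ hΛ]
  simp only [Matrix.mul_assoc]
end

section
/- Let u and v be two quasi-definite moment functionals on Π^d, and let {ℙ_n}_{n≥0} and {ℚ_n}_{n≥0} be the monic OPS associated with u and v, respectively. The following statements are equivalent: (1) there exists a polynomial λ(x) of exact total degree 2 such that v = λ(x)u, i.e., ⟨v,p⟩ = ⟨u, λp⟩ for all p ∈ Π^d; (2) for every n ≥ 1 there exist matrices M_n ∈ M_{r_n^d × r_{n−1}^d}(ℝ) and N_n ∈ M_{r_n^d × r_{n−2}^d}(ℝ) (n ≥ 2), with N_2 ≠ 0, such that ℙ_n = ℚ_n + M_n ℚ_{n−1} + N_n ℚ_{n−2} (where ℚ_{−1} = 0 and the N_n term is absent for n = 1). -/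
open MvPolynomial Matrix

/-!
Both directions go through the expansion of `ℙ_n` in the basis `{ℚ_m}`, whose coordinates in
degree `m` are read off from the pairings `⟨v, p ℚ_m⟩` because the matrices `H_m` are invertible.
If `v = λu` with `deg λ = 2`, then `ℙ_n - ℚ_n` has degree `< n` (both systems are monic) and
`⟨v, (ℙ_n - ℚ_n) ℚ_m⟩ = ⟨u, λ ℚ_m ℙ_n⟩ = 0` for `m + 2 < n`, so only `ℚ_{n-1}` and `ℚ_{n-2}`
survive. Conversely, the relation gives `⟨v, ℙ_n⟩ = 0` for `n ≥ 3`, and a functional killing all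
`ℙ_n` with `n > k` is `λu` for the `λ` of degree `≤ k` whose `ℙ_n`-coordinates are
`⟨v, ℙ_n⟩ H_n⁻¹`. In both directions `deg λ = 2` exactly when `⟨u, λ ℙ_2⟩ = ⟨v, ℙ_2⟩ ≠ 0`, and by
the relation in degree two `⟨v, ℙ_2⟩ = N_2 ⟨v, ℚ_0⟩`.
-/

namespace Idx

variable {d : ℕ}

def ofFinsupp (ν : Fin d →₀ ℕ) : Idx d ν.degree :=
  ⟨ν, by simp [Finset.Nat.mem_antidiagonalTuple, Finsupp.degree_eq_sum]⟩

lemma monIdx_ofFinsupp (ν : Fin d →₀ ℕ) : monIdx (ofFinsupp ν) = monomial ν 1 := by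
  simp [monIdx, ofFinsupp]

lemma degree_equivFunOnFinite_symm {n : ℕ} (α : Idx d n) :
    (Finsupp.equivFunOnFinite.symm α.1).degree = n := by
  rw [Finsupp.degree_eq_sum]
  exact Finset.Nat.mem_antidiagonalTuple.mp α.2

lemma equivFunOnFinite_symm_inj {n : ℕ} {α β : Idx d n} :
    Finsupp.equivFunOnFinite.symm α.1 = Finsupp.equivFunOnFinite.symm β.1 ↔ α = β :=
  Finsupp.equivFunOnFinite.symm.injective.eq_iff.trans Subtype.ext_iff.symm

instance : Unique (Idx d 0) where
  default := zeroIdx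
  uniq α := Subtype.ext <| funext fun i =>
    Finset.sum_eq_zero_iff.mp (Finset.Nat.mem_antidiagonalTuple.mp α.2) i (Finset.mem_univ i)

lemma monIdx_zero (α : Idx d 0) : monIdx α = 1 := by
  have hν : Finsupp.equivFunOnFinite.symm α.1 = 0 := by
    rw [← Finsupp.degree_eq_zero_iff, degree_equivFunOnFinite_symm]
  rw [monIdx, hν, monomial_zero', C_1]

end Idx

lemma totalDegree_eq_iff_exists_coeff_ne_zero {d n : ℕ} {p : MvPolynomial (Fin d) ℝ}
    (hn : 0 < n) (hp : p.totalDegree ≤ n) :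
    p.totalDegree = n ↔ ∃ γ : Idx d n, coeff (Finsupp.equivFunOnFinite.symm γ.1) p ≠ 0 := by
  constructor
  · intro hdeg
    have hp0 : p ≠ 0 := by rintro rfl; simp at hdeg; omega
    obtain ⟨ν, hν, hνdeg⟩ := Finset.exists_mem_eq_sup p.support (support_nonempty.mpr hp0)
      fun ν => ν.sum fun _ e => e
    obtain rfl : ν.degree = n := hνdeg.symm.trans hdeg
    exact ⟨Idx.ofFinsupp ν, by simpa [Idx.ofFinsupp] using mem_support_iff.mp hν⟩
  · rintro ⟨γ, hγ⟩
    exact le_antisymm hp <| (Idx.degree_equivFunOnFinite_symm γ).symm.trans_le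
      (le_totalDegree (mem_support_iff.mpr hγ))

lemma degree_lt_of_totalDegree_lt {σ R : Type*} [CommSemiring R] {p : MvPolynomial σ R} {n : ℕ}
    (hp : p.totalDegree < n) {ν : σ →₀ ℕ} (hν : ν ∈ p.support) : ν.degree < n :=
  (le_totalDegree hν).trans_lt hp

namespace IsOPS

variable {d : ℕ} {u : MvPolynomial (Fin d) ℝ →ₗ[ℝ] ℝ} {P : PolySystem d}

lemma map_mul_vec_eq_zero (hP : IsOPS u P) {q : MvPolynomial (Fin d) ℝ} {n : ℕ}
    (hq : ∀ ν ∈ q.support, ν.degree < n) (β : Idx d n) : u (q * P.vec n β) = 0 := by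
  rw [q.as_sum, Finset.sum_mul, map_sum]
  refine Finset.sum_eq_zero fun ν hν => ?_
  have hmon : monomial ν (coeff ν q) = coeff ν q • monIdx (Idx.ofFinsupp ν) := by
    rw [Idx.monIdx_ofFinsupp, smul_monomial, smul_eq_mul, mul_one]
  rw [hmon, smul_mul_assoc, map_smul, hP.1 _ _ (hq ν hν), smul_zero]

lemma map_mul_vec_eq_zero_of_totalDegree_lt (hP : IsOPS u P) {q : MvPolynomial (Fin d) ℝ}
    {n : ℕ} (hq : q.totalDegree < n) (β : Idx d n) : u (q * P.vec n β) = 0 :=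
  hP.map_mul_vec_eq_zero (fun _ => degree_lt_of_totalDegree_lt hq) β

lemma map_vec_mul_vec_eq_zero (hP : IsOPS u P) {m n : ℕ} (hmn : m ≠ n) (α : Idx d m)
    (β : Idx d n) : u (P.vec m α * P.vec n β) = 0 := by
  rcases hmn.lt_or_gt with h | h
  · exact hP.map_mul_vec_eq_zero_of_totalDegree_lt (by rwa [P.degree_eq]) β
  · rw [mul_comm]
    exact hP.map_mul_vec_eq_zero_of_totalDegree_lt (by rwa [P.degree_eq]) α

lemma map_vec_eq_zero (hP : IsOPS u P) {n : ℕ} (hn : 0 < n) (β : Idx d n) :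
    u (P.vec n β) = 0 := by
  simpa [Idx.monIdx_zero] using hP.1 0 n hn default β

lemma map_vec_zero_ne_zero (hP : IsOPS u P) (β : Idx d 0) : u (P.vec 0 β) ≠ 0 := by
  simpa [Matrix.det_unique, Idx.monIdx_zero, Unique.eq_default β] using (hP.2 0).ne_zero

end IsOPS

lemma map_matVec {d : ℕ} {a b : Type} [Fintype b] (v : MvPolynomial (Fin d) ℝ →ₗ[ℝ] ℝ)
    (A : Matrix a b ℝ) (w : b → MvPolynomial (Fin d) ℝ) (i : a) :
    v (matVec A w i) = ∑ j, A i j * v (w j) := by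
  simp [matVec]

namespace PolySystem.IsMonic

variable {d : ℕ} {P Q : PolySystem d}

lemma coeff_sub_monIdx_eq_zero (hP : P.IsMonic) {n : ℕ} (α : Idx d n) {ν : Fin d →₀ ℕ}
    (hν : n ≤ ν.degree) : coeff ν (P.vec n α - monIdx α) = 0 := by
  rcases hν.eq_or_lt with hνn | hνn
  · rw [coeff_sub, hP n α ν hνn.symm, monIdx, coeff_monomial]
    simp [eq_comm]
  · have hα : (monIdx α).totalDegree < ν.degree := by
      rw [monIdx, totalDegree_monomial _ one_ne_zero]
      exact (Idx.degree_equivFunOnFinite_symm α).trans_lt hνn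
    rw [coeff_sub, coeff_eq_zero_of_totalDegree_lt (by rwa [P.degree_eq]),
      coeff_eq_zero_of_totalDegree_lt hα, sub_zero]

lemma degree_lt_of_mem_support_sub_monIdx (hP : P.IsMonic) {n : ℕ} (α : Idx d n)
    {ν : Fin d →₀ ℕ} (hν : ν ∈ (P.vec n α - monIdx α).support) : ν.degree < n :=
  lt_of_not_ge fun h => mem_support_iff.mp hν (hP.coeff_sub_monIdx_eq_zero α h)

lemma totalDegree_sub_lt (hP : P.IsMonic) (hQ : Q.IsMonic) {n : ℕ} (hn : 0 < n)
    (α : Idx d n) : (P.vec n α - Q.vec n α).totalDegree < n := by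
  refine (Finset.sup_lt_iff hn).mpr fun ν hν => lt_of_not_ge fun h => mem_support_iff.mp hν ?_
  rw [← sub_sub_sub_cancel_right _ _ (monIdx α), coeff_sub, hP.coeff_sub_monIdx_eq_zero α h,
    hQ.coeff_sub_monIdx_eq_zero α h, sub_zero]

end PolySystem.IsMonic

namespace IsOPS

variable {d : ℕ} {u : MvPolynomial (Fin d) ℝ →ₗ[ℝ] ℝ} {P : PolySystem d}

lemma Hmat_eq (hP : IsOPS u P) (hPm : P.IsMonic) (n : ℕ) :
    Hmat u P n = Matrix.of fun α β : Idx d n => u (monIdx α * P.vec n β) := by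
  ext α β
  rw [Hmat, of_apply, of_apply, ← sub_add_cancel (P.vec n α) (monIdx α), add_mul, map_add,
    hP.map_mul_vec_eq_zero (fun _ => hPm.degree_lt_of_mem_support_sub_monIdx α), zero_add]

lemma isUnit_Hmat (hP : IsOPS u P) (hPm : P.IsMonic) (n : ℕ) : IsUnit (Hmat u P n) := by
  rw [isUnit_iff_isUnit_det, hP.Hmat_eq hPm]
  exact hP.2 n

end IsOPS

namespace PolySystem

variable {d : ℕ} (P : PolySystem d)

noncomputable def basis : Module.Basis (Σ n, Idx d n) ℝ (MvPolynomial (Fin d) ℝ) :=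
  Module.Basis.mk P.indep fun p _ =>
    Submodule.span_mono (by rintro _ ⟨m, -, α, rfl⟩; exact ⟨⟨m, α⟩, rfl⟩)
      (P.spans _ p le_rfl)

@[simp]
lemma basis_apply (σ : Σ n, Idx d n) : P.basis σ = P.vec σ.1 σ.2 := by
  simp [basis]

@[simp]
lemma basis_repr_vec {m : ℕ} (α : Idx d m) :
    P.basis.repr (P.vec m α) = Finsupp.single ⟨m, α⟩ 1 := by
  simpa using P.basis.repr_self ⟨m, α⟩

noncomputable def coeffVec (p : MvPolynomial (Fin d) ℝ) (m : ℕ) : Idx d m → ℝ :=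
  fun β => P.basis.repr p ⟨m, β⟩

lemma coeffVec_eq_zero_of_totalDegree_lt {p : MvPolynomial (Fin d) ℝ} {m : ℕ}
    (hp : p.totalDegree < m) : P.coeffVec p m = 0 := by
  have hspan : p ∈ Submodule.span ℝ (P.basis '' {σ | σ.1 ≤ p.totalDegree}) := by
    convert P.spans _ p le_rfl using 2
    ext q
    simp [eq_comm]
  funext β
  by_contra hβ
  exact (P.basis.mem_span_image.mp hspan (Finsupp.mem_support_iff.mpr hβ)).not_gt hp

lemma eq_sum_coeffVec {p : MvPolynomial (Fin d) ℝ} (S : Finset ℕ)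
    (hS : ∀ m ∉ S, P.coeffVec p m = 0) :
    p = ∑ m ∈ S, ∑ β, P.coeffVec p m β • P.vec m β := by
  classical
  have hsupp : (P.basis.repr p).support ⊆ S.sigma fun _ => Finset.univ := by
    intro σ hσ
    by_contra hσS
    exact Finsupp.mem_support_iff.mp hσ
      (congrFun (hS σ.1 fun h => hσS (Finset.mem_sigma.mpr ⟨h, Finset.mem_univ _⟩)) σ.2)
  conv_lhs => rw [← P.basis.linearCombination_repr p, Finsupp.linearCombination_apply,
    Finsupp.sum_of_support_subset _ hsupp _ (by simp), Finset.sum_sigma]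
  simp [coeffVec]

end PolySystem

namespace PolySystem.IsMonic

variable {d : ℕ} {P : PolySystem d}

lemma coeffVec_eq_coeff (hP : P.IsMonic) {p : MvPolynomial (Fin d) ℝ} {n : ℕ}
    (hp : p.totalDegree ≤ n) (γ : Idx d n) :
    P.coeffVec p n γ = coeff (Finsupp.equivFunOnFinite.symm γ.1) p := by
  classical
  have hexp := P.eq_sum_coeffVec (Finset.range (n + 1)) fun m hm =>
    P.coeffVec_eq_zero_of_totalDegree_lt (p := p) (by simp at hm; omega)
  have hlow : ∀ m < n, ∀ β : Idx d m,
      coeff (Finsupp.equivFunOnFinite.symm γ.1) (P.vec m β) = 0 :=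
    fun m hm β => coeff_eq_zero_of_totalDegree_lt <| by
      rw [P.degree_eq]; exact hm.trans_eq (Idx.degree_equivFunOnFinite_symm γ).symm
  have htop : ∀ β : Idx d n, coeff (Finsupp.equivFunOnFinite.symm γ.1) (P.vec n β) =
      if γ = β then 1 else 0 := fun β => by
    simp only [hP n β _ (Idx.degree_equivFunOnFinite_symm γ), Idx.equivFunOnFinite_symm_inj]
  conv_rhs => rw [hexp]
  rw [coeff_sum, Finset.sum_range_succ, Finset.sum_eq_zero fun m hm => by
    simp [coeff_sum, hlow m (Finset.mem_range.mp hm)]]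
  simp [coeff_sum, htop]

end PolySystem.IsMonic

namespace IsOPS

variable {d : ℕ} {u : MvPolynomial (Fin d) ℝ →ₗ[ℝ] ℝ} {P : PolySystem d}

lemma map_mul_vec_eq_vecMul_Hmat (hP : IsOPS u P) (p : MvPolynomial (Fin d) ℝ) (n : ℕ) :
    (fun β => u (p * P.vec n β)) = P.coeffVec p n ᵥ* Hmat u P n := by
  classical
  funext β
  have hlin : u ∘ₗ LinearMap.mulRight ℝ (P.vec n β) =
      ∑ γ, Hmat u P n γ β • (Finsupp.lapply ⟨n, γ⟩ ∘ₗ P.basis.repr.toLinearMap) := by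
    refine P.basis.ext fun ⟨m, α⟩ => ?_
    by_cases hm : m = n
    · subst hm
      simp [Finsupp.single_apply, Hmat]
    · simp [hm, hP.map_vec_mul_vec_eq_zero hm]
  simpa [vecMul, dotProduct, PolySystem.coeffVec, mul_comm] using LinearMap.congr_fun hlin p

lemma coeffVec_eq_zero_iff (hP : IsOPS u P) (hPm : P.IsMonic) (p : MvPolynomial (Fin d) ℝ)
    (n : ℕ) : P.coeffVec p n = 0 ↔ ∀ β, u (p * P.vec n β) = 0 := by
  rw [← (vecMul_injective_of_isUnit (hP.isUnit_Hmat hPm n)).eq_iff, zero_vecMul,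
    ← hP.map_mul_vec_eq_vecMul_Hmat, _root_.funext_iff]
  rfl

lemma totalDegree_eq_iff (hP : IsOPS u P) (hPm : P.IsMonic) {p : MvPolynomial (Fin d) ℝ}
    {n : ℕ} (hn : 0 < n) (hp : p.totalDegree ≤ n) :
    p.totalDegree = n ↔ ∃ β, u (p * P.vec n β) ≠ 0 := by
  rw [totalDegree_eq_iff_exists_coeff_ne_zero hn hp, ← not_iff_not]
  simp only [not_exists, not_not]
  rw [← hP.coeffVec_eq_zero_iff hPm, _root_.funext_iff]
  simp [hPm.coeffVec_eq_coeff hp]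

end IsOPS

section Christoffel

variable {d : ℕ} {u v : MvPolynomial (Fin d) ℝ →ₗ[ℝ] ℝ} {P Q : PolySystem d}

lemma coeffVec_sub_eq_zero_of_eq_mul (hP : IsOPS u P) (hQ : IsOPS v Q) (hQm : Q.IsMonic)
    {lam : MvPolynomial (Fin d) ℝ} {k : ℕ} (hdeg : lam.totalDegree ≤ k)
    (hlam : ∀ p, v p = u (lam * p)) {m n : ℕ} (hmn : m + k < n) (α : Idx d n) :
    Q.coeffVec (P.vec n α - Q.vec n α) m = 0 := by
  refine (hQ.coeffVec_eq_zero_iff hQm _ m).mpr fun β => ?_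
  have hPβ : u (lam * Q.vec m β * P.vec n α) = 0 :=
    hP.map_mul_vec_eq_zero_of_totalDegree_lt ((totalDegree_mul _ _).trans_lt <| by
      rw [Q.degree_eq]; omega) α
  rw [sub_mul, map_sub, hQ.map_vec_mul_vec_eq_zero (by omega), hlam, ← mul_assoc,
    mul_right_comm, hPβ, sub_zero]

theorem exists_connection_formula (hP : IsOPS u P) (hPm : P.IsMonic) (hQ : IsOPS v Q)
    (hQm : Q.IsMonic) {lam : MvPolynomial (Fin d) ℝ} (hdeg : lam.totalDegree ≤ 2)
    (hlam : ∀ p, v p = u (lam * p)) :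
    ∃ (M : (n : ℕ) → Matrix (Idx d (n + 1)) (Idx d n) ℝ)
      (N : (n : ℕ) → Matrix (Idx d (n + 2)) (Idx d n) ℝ),
      (∀ α : Idx d 1, P.vec 1 α = Q.vec 1 α + matVec (M 0) (Q.vec 0) α) ∧
      ∀ (n : ℕ) (α : Idx d (n + 2)),
        P.vec (n + 2) α = Q.vec (n + 2) α + matVec (M (n + 1)) (Q.vec (n + 1)) α +
          matVec (N n) (Q.vec n) α := by
  set c := fun n (α : Idx d n) => Q.coeffVec (P.vec n α - Q.vec n α)
  have hhigh : ∀ {n m} (α : Idx d n), 0 < n → n ≤ m → c n α m = 0 := fun α hn hnm =>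
    Q.coeffVec_eq_zero_of_totalDegree_lt ((hPm.totalDegree_sub_lt hQm hn α).trans_le hnm)
  refine ⟨fun n => Matrix.of fun α => c (n + 1) α n, fun n => Matrix.of fun α => c (n + 2) α n,
    fun α => ?_, fun n α => ?_⟩
  · have hexp := Q.eq_sum_coeffVec {0} fun m hm =>
      hhigh α one_pos (Nat.one_le_iff_ne_zero.mpr (Finset.notMem_singleton.mp hm))
    rw [Finset.sum_singleton] at hexp
    exact sub_eq_iff_eq_add'.mp hexp
  · have hexp := Q.eq_sum_coeffVec {n, n + 1} fun m hm => by
      simp only [Finset.mem_insert, Finset.mem_singleton, not_or] at hm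
      rcases lt_or_gt_of_ne hm.1 with hlt | hgt
      · exact coeffVec_sub_eq_zero_of_eq_mul hP hQ hQm hdeg hlam (by omega) α
      · exact hhigh α (by omega) (by omega)
    rw [Finset.sum_pair (by omega)] at hexp
    simp only [matVec, Matrix.of_apply]
    linear_combination hexp

theorem IsOPS.exists_eq_mul_of_map_vec_eq_zero (hP : IsOPS u P) (hPm : P.IsMonic)
    (w : MvPolynomial (Fin d) ℝ →ₗ[ℝ] ℝ) (k : ℕ)
    (hw : ∀ n, k < n → ∀ α : Idx d n, w (P.vec n α) = 0) :
    ∃ lam : MvPolynomial (Fin d) ℝ, lam.totalDegree ≤ k ∧ ∀ p, w p = u (lam * p) := by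
  classical
  -- the coordinates of `lam` in degree `n ≤ k` solve `c ᵥ* H_n = ⟨w, ℙ_n⟩`
  set g : (Σ n, Idx d n) → ℝ := fun σ =>
    if σ.1 ≤ k then ((fun β => w (P.vec σ.1 β)) ᵥ* (Hmat u P σ.1)⁻¹) σ.2 else 0
  set f := Finsupp.onFinset ((Finset.range (k + 1)).sigma fun _ => Finset.univ) g fun σ hσ =>
    Finset.mem_sigma.mpr ⟨Finset.mem_range_succ_iff.mpr (by by_contra h; simp [g, h] at hσ),
      Finset.mem_univ _⟩
  set lam := P.basis.repr.symm f
  have hcoeff : ∀ n, P.coeffVec lam n =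
      if n ≤ k then (fun β => w (P.vec n β)) ᵥ* (Hmat u P n)⁻¹ else 0 := by
    intro n
    funext β
    split_ifs with hn <;> simp [PolySystem.coeffVec, lam, f, g, hn]
  refine ⟨lam, ?_, fun p => ?_⟩
  · have hspan : lam ∈ Submodule.span ℝ (P.basis '' {σ | σ.1 ≤ k}) := by
      refine P.basis.mem_span_image.mpr fun σ hσ => ?_
      simp only [lam, f, g, LinearEquiv.apply_symm_apply, Finset.mem_coe,
        Finsupp.mem_support_onFinset, ne_eq, ite_eq_right_iff, not_forall] at hσ
      exact hσ.1
    refine (mem_restrictTotalDegree _ _ _).mp (Submodule.span_le.mpr ?_ hspan)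
    rintro _ ⟨σ, hσ, rfl⟩
    simpa [mem_restrictTotalDegree, P.degree_eq] using hσ
  · have hbasis : w = u ∘ₗ LinearMap.mulLeft ℝ lam := P.basis.ext fun ⟨n, α⟩ => by
      have := congrFun (hP.map_mul_vec_eq_vecMul_Hmat lam n) α
      simp only [LinearMap.comp_apply, LinearMap.mulLeft_apply, PolySystem.basis_apply] at this ⊢
      rw [this, hcoeff]
      split_ifs with hn
      · rw [vecMul_vecMul, nonsing_inv_mul _ ((isUnit_iff_isUnit_det _).mp
          (hP.isUnit_Hmat hPm n)), vecMul_one]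
      · rw [zero_vecMul, hw n (not_le.mp hn)]; rfl
    rw [hbasis]
    rfl

lemma IsOPS.eq_zero_iff_forall_map_eq_zero (hQ : IsOPS v Q)
    {p : Idx d 2 → MvPolynomial (Fin d) ℝ}
    (M : Matrix (Idx d 2) (Idx d 1) ℝ) (N : Matrix (Idx d 2) (Idx d 0) ℝ)
    (hp : ∀ α, p α = Q.vec 2 α + matVec M (Q.vec 1) α + matVec N (Q.vec 0) α) :
    N = 0 ↔ ∀ α, v (p α) = 0 := by
  have hvp : ∀ α, v (p α) = N α default * v (Q.vec 0 default) := fun α => by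
    simp [hp, map_matVec, hQ.map_vec_eq_zero]
  simp only [hvp, mul_eq_zero, hQ.map_vec_zero_ne_zero, or_false]
  exact ⟨fun hN α => by simp [hN],
    fun hN => ext fun α β => by simpa [Unique.eq_default β] using hN α⟩

end Christoffel

-- `M n` and `Nmat n` are the paper's `M_{n+1}` and `N_{n+2}`.
theorem christoffel_characterization_general
    {d : ℕ}
    (u v : MvPolynomial (Fin d) ℝ →ₗ[ℝ] ℝ)
    (P : PolySystem d) (hP : IsOPS u P) (hPmonic : P.IsMonic)
    (Q : PolySystem d) (hQ : IsOPS v Q) (hQmonic : Q.IsMonic) :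
    (∃ lam : MvPolynomial (Fin d) ℝ, lam.totalDegree = 2 ∧
        ∀ p : MvPolynomial (Fin d) ℝ, v p = u (lam * p)) ↔
    (∃ (M : (n : ℕ) → Matrix (Idx d (n + 1)) (Idx d n) ℝ)
        (Nmat : (n : ℕ) → Matrix (Idx d (n + 2)) (Idx d n) ℝ),
      Nmat 0 ≠ 0 ∧
      (∀ α : Idx d 1, P.vec 1 α = Q.vec 1 α + matVec (M 0) (Q.vec 0) α) ∧
      (∀ (n : ℕ) (α : Idx d (n + 2)),
        P.vec (n + 2) α = Q.vec (n + 2) α + matVec (M (n + 1)) (Q.vec (n + 1)) α +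
          matVec (Nmat n) (Q.vec n) α)) := by
  constructor
  · rintro ⟨lam, hdeg, hlam⟩
    obtain ⟨M, N, h1, h2⟩ := exists_connection_formula hP hPmonic hQ hQmonic hdeg.le hlam
    obtain ⟨β, hβ⟩ := (hP.totalDegree_eq_iff hPmonic two_pos hdeg.le).mp hdeg
    refine ⟨M, N, fun hN => hβ ?_, h1, h2⟩
    rw [← hlam]
    exact (hQ.eq_zero_iff_forall_map_eq_zero (M 1) (N 0) (h2 0)).mp hN β
  · rintro ⟨M, N, hN, -, h2⟩
    have hv : ∀ n, 2 < n → ∀ α : Idx d n, v (P.vec n α) = 0 := by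
      intro n hn α
      obtain ⟨m, rfl⟩ : ∃ m, n = m + 1 + 2 := ⟨n - 3, by omega⟩
      simp [h2 (m + 1), map_matVec, hQ.map_vec_eq_zero]
    obtain ⟨lam, hdeg, hlam⟩ := hP.exists_eq_mul_of_map_vec_eq_zero hPmonic v 2 hv
    refine ⟨lam, (hP.totalDegree_eq_iff hPmonic two_pos hdeg).mpr ?_, hlam⟩
    rw [Ne, hQ.eq_zero_iff_forall_map_eq_zero (M 1) (N 0) (h2 0)] at hN
    simpa [hlam] using hN

/-- Theorem 4.1. Let `u` and `v` be quasi-definite moment functionals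
with monic OPS `{ℙ_n}` and `{ℚ_n}` respectively.  Then there exists a polynomial `λ(x)`
of exact total degree 2 with `v = λ(x)u` if and only if there exist matrices `M_n`
(`n ≥ 1`) and `N_n` (`n ≥ 2`), with `N_2 ≠ 0`, such that
`ℙ_n = ℚ_n + M_n ℚ_{n-1} + N_n ℚ_{n-2}` (the `N_n`-term being absent for `n = 1`).
Here `M (n)` stands for `M_{n+1}` and `Nmat (n)` for `N_{n+2}`. -/
theorem christoffel_characterization
    {d : ℕ} (hd : 1 ≤ d)
    (u v : MvPolynomial (Fin d) ℝ →ₗ[ℝ] ℝ)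
    (P : PolySystem d) (hP : IsOPS u P) (hPmonic : P.IsMonic)
    (Q : PolySystem d) (hQ : IsOPS v Q) (hQmonic : Q.IsMonic) :
    (∃ lam : MvPolynomial (Fin d) ℝ, lam.totalDegree = 2 ∧
        ∀ p : MvPolynomial (Fin d) ℝ, v p = u (lam * p)) ↔
    (∃ (M : (n : ℕ) → Matrix (Idx d (n + 1)) (Idx d n) ℝ)
        (Nmat : (n : ℕ) → Matrix (Idx d (n + 2)) (Idx d n) ℝ),
      Nmat 0 ≠ 0 ∧
      (∀ α : Idx d 1, P.vec 1 α = Q.vec 1 α + matVec (M 0) (Q.vec 0) α) ∧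
      (∀ (n : ℕ) (α : Idx d (n + 2)),
        P.vec (n + 2) α = Q.vec (n + 2) α + matVec (M (n + 1)) (Q.vec (n + 1)) α +
          matVec (Nmat n) (Q.vec n) α)) :=
  christoffel_characterization_general u v P hP hPmonic Q hQ hQmonic
end
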